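/- arXiv:1608.02822 — 6 statements merged into one kernel-verified Lean document; each statement's English description precedes it below -/
import Mathlib

section
/- Let f0 : (0,∞) → [0,∞) be a C¹, integrable function with ∫₀^∞ f0(y) dy = 1, set ρ(t) = ∫_t^∞ f0(y) dy, and let T > 0 satisfy ρ(T) > 0. Suppose g : (0,∞) × [0,T] → [0,∞) is C¹, with g(·,t) integrable and ∫₀^∞ g(y,t) dy > 0 for every t ∈ [0,T], g(·,0) = f0, and ∂_t g(x,t) − ∂_x g(x,t) = −(g(0,t)/∫₀^∞ g(y,t) dy) · g(x,t) for all x > 0 and t ∈ (0,T). Then g(x,t) = ρ(t) f0(x+t) for all x > 0 and t ∈ [0,T]. -/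
/-!
Along a characteristic `r ↦ g (c - r) r` the equation is the linear ODE `u' = -λ u` with
`λ t = g 0 t / ∫ g(·,t) ≥ 0`. Two solutions of one linear ODE are proportional as long as one of
them stays positive, and positivity propagates backwards in time. Since the mass at time `t` is
positive, some characteristic is positive on `[0, t]`, so `g (·) t = C * f0 (· + t)`; the boundary
value and the mass of this profile give `λ t = f0 t / ρ t`. As `ρ' = -f0 = -(f0 / ρ) ρ`, every
characteristic is then proportional to `ρ`, which is the claim.
-/

open MeasureTheory Set Filter Topology

theorem setIntegral_Ioi_zero_comp_add_right (f : ℝ → ℝ) (t : ℝ) :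
    ∫ y in Ioi 0, f (y + t) = ∫ y in Ioi t, f y := by
  have hemb : MeasurableEmbedding (· + t : ℝ → ℝ) := measurableEmbedding_addRight t
  have hpre : (· + t) ⁻¹' Ioi t = Ioi (0 : ℝ) := by ext; simp
  rw [← hpre, (measurePreserving_add_right volume t).setIntegral_preimage_emb hemb]

theorem hasDerivAt_setIntegral_Ioi {f : ℝ → ℝ} {a s : ℝ} (hf : IntegrableOn f (Ioi a))
    (hfs : ContinuousAt f s) (has : a < s) :
    HasDerivAt (fun b => ∫ x in Ioi b, f x) (-f s) s := by
  have hprim : HasDerivAt (fun b => ∫ x in a..b, f x) (f s) s :=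
    intervalIntegral.integral_hasDerivAt_right
      (intervalIntegrable_iff_integrableOn_Ioc_of_le has.le |>.2 (hf.mono_set Ioc_subset_Ioi_self))
      (AEStronglyMeasurable.stronglyMeasurableAtFilter_of_mem hf.aestronglyMeasurable
        (Ioi_mem_nhds has)) hfs
  refine (hprim.const_sub (∫ x in Ioi a, f x)).congr_of_eventuallyEq ?_
  filter_upwards [Ioi_mem_nhds has] with b hb
  rw [← intervalIntegral.integral_Ioi_sub_Ioi hf hb.le, sub_sub_cancel]

theorem antitoneOn_setIntegral_Ioi {f : ℝ → ℝ} {a : ℝ} (hf : IntegrableOn f (Ioi a))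
    (hf_nonneg : ∀ x ∈ Ioi a, 0 ≤ f x) : AntitoneOn (fun s => ∫ x in Ioi s, f x) (Ici a) :=
  fun _ hs _ _ hst => setIntegral_mono_set (hf.mono_set (Ioi_subset_Ioi hs))
    ((ae_restrict_iff' measurableSet_Ioi).2 (ae_of_all _ fun x hx =>
      hf_nonneg x ((mem_Ici.1 hs).trans_lt hx)))
    (Ioi_subset_Ioi hst).eventuallyLE

theorem cross_mul_eq_of_hasDerivAt_eq_mul {u v k : ℝ → ℝ} {a b : ℝ} (hab : a < b)
    (hu : ContinuousOn u (Icc a b)) (hv : ContinuousOn v (Icc a b))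
    (hu' : ∀ s ∈ Ioo a b, HasDerivAt u (k s * u s) s)
    (hv' : ∀ s ∈ Ioo a b, HasDerivAt v (k s * v s) s)
    (hv_pos : ∀ s ∈ Icc a b, 0 < v s) :
    u b * v a = u a * v b := by
  have hq' : ∀ s ∈ Ioo a b, HasDerivAt (u / v) 0 s := fun s hs =>
    ((hu' s hs).div (hv' s hs) (hv_pos s (Ioo_subset_Icc_self hs)).ne').congr_deriv (by ring)
  obtain ⟨c, -, hc⟩ := exists_hasDerivAt_eq_slope _ _ hab
    (hu.div hv fun s hs => (hv_pos s hs).ne') hq'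
  have hva := (hv_pos a (left_mem_Icc.2 hab.le)).ne'
  have hvb := (hv_pos b (right_mem_Icc.2 hab.le)).ne'
  rw [eq_comm, div_eq_zero_iff, sub_eq_zero, Pi.div_apply, Pi.div_apply,
    div_eq_div_iff hvb hva] at hc
  exact hc.resolve_right (sub_ne_zero.2 hab.ne')

theorem pos_of_hasDerivAt_neg_mul {v k : ℝ → ℝ} {a b : ℝ} (hv : ContinuousOn v (Icc a b))
    (hv' : ∀ s ∈ Ioo a b, HasDerivAt v (-k s * v s) s) (hk : ∀ s ∈ Ioo a b, 0 ≤ k s)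
    (hv_nonneg : ∀ s ∈ Ioo a b, 0 ≤ v s) (hb : 0 < v b) : ∀ s ∈ Icc a b, 0 < v s := by
  have hanti : AntitoneOn v (Icc a b) := by
    refine antitoneOn_of_hasDerivWithinAt_nonpos (convex_Icc a b) hv
      (fun s hs => (hv' s (by simpa using hs)).hasDerivWithinAt) fun s hs => ?_
    rw [interior_Icc] at hs
    nlinarith [hk s hs, hv_nonneg s hs]
  exact fun s hs => hb.trans_le (hanti hs (right_mem_Icc.2 (hs.1.trans hs.2)) hs.2)

theorem hasDerivAt_characteristic {g : ℝ → ℝ → ℝ} {c s : ℝ}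
    (hg : DifferentiableAt ℝ (fun p : ℝ × ℝ => g p.1 p.2) (c - s, s)) :
    HasDerivAt (fun r => g (c - r) r)
      (deriv (fun τ => g (c - s) τ) s - deriv (fun y => g y s) (c - s)) s := by
  set D := fderiv ℝ (fun p : ℝ × ℝ => g p.1 p.2) (c - s, s)
  have hF : HasFDerivAt (fun p : ℝ × ℝ => g p.1 p.2) D (c - s, s) := hg.hasFDerivAt
  have hx : HasDerivAt (fun y => g y s) (D (1, 0)) (c - s) :=
    hF.comp_hasDerivAt (f := fun y => (y, s)) _ ((hasDerivAt_id _).prodMk (hasDerivAt_const _ _))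
  have ht : HasDerivAt (fun τ => g (c - s) τ) (D (0, 1)) s :=
    hF.comp_hasDerivAt (f := fun τ => (c - s, τ)) _
      ((hasDerivAt_const _ _).prodMk (hasDerivAt_id _))
  have hchar := hF.comp_hasDerivAt (f := fun r => (c - r, r)) s
    (((hasDerivAt_id s).const_sub c).prodMk (hasDerivAt_id s))
  rwa [show ((-1 : ℝ), (1 : ℝ)) = (0, 1) - (1, 0) by norm_num, map_sub, ← hx.deriv,
    ← ht.deriv] at hchar

theorem continuousOn_characteristic {g : ℝ → ℝ → ℝ} {T t c : ℝ}
    (hg : ContinuousOn (fun p : ℝ × ℝ => g p.1 p.2) (Ioi 0 ×ˢ Icc 0 T)) (htT : t ≤ T)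
    (htc : t < c) : ContinuousOn (fun r => g (c - r) r) (Icc 0 t) :=
  hg.comp ((continuous_const.sub continuous_id).prodMk continuous_id).continuousOn
    fun _ hr => ⟨sub_pos.2 (hr.2.trans_lt htc), hr.1, hr.2.trans htT⟩

theorem hasDerivAt_characteristic_of_damped_transport {g : ℝ → ℝ → ℝ} {k : ℝ → ℝ} {T c s : ℝ}
    (hg : ContDiffOn ℝ 1 (fun p : ℝ × ℝ => g p.1 p.2) (Ioi 0 ×ˢ Icc 0 T))
    (hpde : ∀ x ∈ Ioi (0 : ℝ), ∀ t ∈ Ioo (0 : ℝ) T,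
      deriv (fun s => g x s) t - deriv (fun y => g y t) x = -k t * g x t)
    (hs : s ∈ Ioo 0 T) (hsc : s < c) :
    HasDerivAt (fun r => g (c - r) r) (-k s * g (c - s) s) s := by
  have hmem : Ioi 0 ×ˢ Icc 0 T ∈ 𝓝 (c - s, s) :=
    mem_of_superset ((isOpen_Ioi.prod isOpen_Ioo).mem_nhds ⟨sub_pos.2 hsc, hs⟩)
      (prod_mono subset_rfl Ioo_subset_Icc_self)
  rw [← hpde (c - s) (sub_pos.2 hsc) s hs]
  exact hasDerivAt_characteristic ((hg.contDiffAt hmem).differentiableAt one_ne_zero)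

theorem exists_eq_const_mul_shifted_initial {g : ℝ → ℝ → ℝ} {k : ℝ → ℝ} {t : ℝ}
    (ht : 0 < t) (hcont : ∀ c > t, ContinuousOn (fun r => g (c - r) r) (Icc 0 t))
    (hderiv : ∀ c > t, ∀ s ∈ Ioo 0 t,
      HasDerivAt (fun r => g (c - r) r) (-k s * g (c - s) s) s)
    (hk : ∀ s ∈ Ioo 0 t, 0 ≤ k s) (hg : ∀ x ∈ Ioi (0 : ℝ), ∀ s ∈ Ioo 0 t, 0 ≤ g x s)
    (hmass : 0 < ∫ x in Ioi 0, g x t) :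
    ∃ C ≠ 0, ∀ x ∈ Ioi (0 : ℝ), g x t = C * g (x + t) 0 := by
  obtain ⟨y, hy, hgy⟩ : ∃ y ∈ Ioi (0 : ℝ), 0 < g y t := by
    by_contra! h
    exact hmass.not_ge (setIntegral_nonpos measurableSet_Ioi h)
  have hyt : y + t > t := lt_add_of_pos_left t hy
  have hv_pos : ∀ s ∈ Icc 0 t, 0 < g (y + t - s) s :=
    pos_of_hasDerivAt_neg_mul (hcont _ hyt) (hderiv _ hyt) hk
      (fun s hs => hg _ (sub_pos.2 (hs.2.trans hyt)) s hs) (by simpa using hgy)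
  have hv0 : 0 < g (y + t) 0 := by simpa using hv_pos 0 (left_mem_Icc.2 ht.le)
  refine ⟨g y t / g (y + t) 0, div_ne_zero hgy.ne' hv0.ne', fun x hx => ?_⟩
  have hxt : x + t > t := lt_add_of_pos_left t hx
  have hratio := cross_mul_eq_of_hasDerivAt_eq_mul (k := fun s => -k s) ht (hcont _ hxt)
    (hcont _ hyt) (hderiv _ hxt) (hderiv _ hyt) hv_pos
  simp only [add_sub_cancel_right, sub_zero] at hratio
  field_simp
  linarith

theorem div_setIntegral_Ioi_eq_of_eq_mul_comp_add {f h : ℝ → ℝ} {C t : ℝ} (hC : C ≠ 0)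
    (hh : ∀ x ∈ Ioi (0 : ℝ), h x = C * f (x + t)) (hbdry : ContinuousWithinAt h (Ioi 0) 0)
    (hf : ContinuousAt f t) :
    h 0 / ∫ x in Ioi 0, h x = f t / ∫ x in Ioi t, f x := by
  have hcont : ContinuousAt (fun x => C * f (x + t)) 0 :=
    continuousAt_const.mul (hf.comp_of_eq (continuous_add_const t).continuousAt (zero_add t))
  have h0 : h 0 = C * f t := by
    refine tendsto_nhds_unique hbdry ?_
    simpa using hcont.continuousWithinAt.tendsto.congr' (eventuallyEq_nhdsWithin_of_eqOn hh).symm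
  rw [h0, setIntegral_congr_fun measurableSet_Ioi hh, integral_const_mul,
    setIntegral_Ioi_zero_comp_add_right, mul_div_mul_left _ _ hC]

theorem mul_setIntegral_Ioi_eq_of_hasDerivAt {f u : ℝ → ℝ} {t : ℝ} (ht : 0 < t)
    (hf : IntegrableOn f (Ioi 0)) (hfc : ContinuousOn f (Ioi 0))
    (hpos : ∀ s ∈ Icc 0 t, 0 < ∫ x in Ioi s, f x) (hu : ContinuousOn u (Icc 0 t))
    (hu' : ∀ s ∈ Ioo 0 t, HasDerivAt u (-(f s / ∫ x in Ioi s, f x) * u s) s) :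
    u t * ∫ x in Ioi 0, f x = u 0 * ∫ x in Ioi t, f x := by
  refine cross_mul_eq_of_hasDerivAt_eq_mul ht hu
    ((hf.continuousOn_Ici_primitive_Ioi).mono Icc_subset_Ici_self) hu' (fun s hs => ?_) hpos
  have hρ' := hasDerivAt_setIntegral_Ioi hf (hfc.continuousAt (Ioi_mem_nhds hs.1)) hs.1
  rwa [neg_mul, div_mul_cancel₀ _ (hpos s (Ioo_subset_Icc_self hs)).ne']

theorem boundary_div_mass_eq_hazard_rate {f0 : ℝ → ℝ} {g : ℝ → ℝ → ℝ} {T s : ℝ}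
    (hf0 : ContinuousOn f0 (Ioi 0))
    (hg_nonneg : ∀ x ∈ Ioi (0 : ℝ), ∀ t ∈ Icc (0 : ℝ) T, 0 ≤ g x t)
    (hgC1 : ContDiffOn ℝ 1 (fun p : ℝ × ℝ => g p.1 p.2) (Ioi 0 ×ˢ Icc 0 T))
    (hmass : ∀ t ∈ Icc (0 : ℝ) T, 0 < ∫ y in Ioi (0 : ℝ), g y t)
    (hbdry : ∀ t ∈ Icc (0 : ℝ) T, ContinuousWithinAt (fun x => g x t) (Ioi 0) 0)
    (hinit : ∀ x ∈ Ioi (0 : ℝ), g x 0 = f0 x)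
    (hpde : ∀ x ∈ Ioi (0 : ℝ), ∀ t ∈ Ioo (0 : ℝ) T,
      deriv (fun s => g x s) t - deriv (fun y => g y t) x
        = -(g 0 t / ∫ y in Ioi (0 : ℝ), g y t) * g x t)
    (hs : s ∈ Ioo 0 T) :
    g 0 s / ∫ y in Ioi 0, g y s = f0 s / ∫ y in Ioi s, f0 y := by
  have hsT : s ∈ Icc 0 T := Ioo_subset_Icc_self hs
  have hIoo_sub {r : ℝ} (hr : r ∈ Ioo 0 s) : r ∈ Icc 0 T := ⟨hr.1.le, hr.2.le.trans hs.2.le⟩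
  have hrate_nonneg : ∀ r ∈ Icc 0 T, 0 ≤ g 0 r / ∫ y in Ioi 0, g y r := fun r hr =>
    div_nonneg (ge_of_tendsto (hbdry r hr) (eventually_nhdsWithin_of_forall
      fun x hx => hg_nonneg x hx r hr)) (hmass r hr).le
  obtain ⟨C, hC, hprofile⟩ := exists_eq_const_mul_shifted_initial hs.1
    (fun _ hc => continuousOn_characteristic hgC1.continuousOn hs.2.le hc)
    (fun _ hc r hr => hasDerivAt_characteristic_of_damped_transport hgC1 hpde
      ⟨hr.1, hr.2.trans hs.2⟩ (hr.2.trans hc))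
    (fun r hr => hrate_nonneg r (hIoo_sub hr)) (fun x hx r hr => hg_nonneg x hx r (hIoo_sub hr))
    (hmass s hsT)
  refine div_setIntegral_Ioi_eq_of_eq_mul_comp_add hC (fun x hx => ?_) (hbdry s hsT)
    (hf0.continuousAt (Ioi_mem_nhds hs.1))
  rw [hprofile x hx, hinit _ (add_pos hx hs.1)]

theorem kinetic_equation_uniqueness_general
    (f0 : ℝ → ℝ)
    (hf0nonneg : ∀ x ∈ Ioi (0:ℝ), 0 ≤ f0 x)
    (hf0C1 : ContDiffOn ℝ 1 f0 (Ioi 0))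
    (hf0int : IntegrableOn f0 (Ioi 0))
    (hf0norm : ∫ y in Ioi (0:ℝ), f0 y = 1)
    (ρ : ℝ → ℝ) (hρ : ∀ t, ρ t = ∫ y in Ioi t, f0 y)
    (T : ℝ) (hρT : 0 < ρ T)
    (g : ℝ → ℝ → ℝ)
    (hgnonneg : ∀ x ∈ Ioi (0:ℝ), ∀ t ∈ Icc (0:ℝ) T, 0 ≤ g x t)
    (hgC1 : ContDiffOn ℝ 1 (fun p : ℝ × ℝ => g p.1 p.2) (Ioi 0 ×ˢ Icc 0 T))
    (hgmass : ∀ t ∈ Icc (0:ℝ) T, 0 < ∫ y in Ioi (0:ℝ), g y t)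
    (hbdry : ∀ t ∈ Icc (0:ℝ) T, ContinuousWithinAt (fun x => g x t) (Ioi 0) 0)
    (hinit : ∀ x ∈ Ioi (0:ℝ), g x 0 = f0 x)
    (hpde : ∀ x ∈ Ioi (0:ℝ), ∀ t ∈ Ioo (0:ℝ) T,
      deriv (fun s => g x s) t - deriv (fun y => g y t) x
        = -(g 0 t / ∫ y in Ioi (0:ℝ), g y t) * g x t) :
    ∀ x ∈ Ioi (0:ℝ), ∀ t ∈ Icc (0:ℝ) T, g x t = ρ t * f0 (x + t) := by
  intro x hx t ht
  rcases ht.1.eq_or_lt with rfl | ht0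
  · rw [hinit x hx, hρ, hf0norm, one_mul, add_zero]
  have htx : t < x + t := lt_add_of_pos_left t hx
  have hρ_pos : ∀ s ∈ Icc 0 t, 0 < ∫ y in Ioi s, f0 y := fun s hs =>
    (hρ T ▸ hρT).trans_le (antitoneOn_setIntegral_Ioi hf0int hf0nonneg hs.1
      (hs.1.trans (hs.2.trans ht.2)) (hs.2.trans ht.2))
  have hsolution := mul_setIntegral_Ioi_eq_of_hasDerivAt ht0 hf0int hf0C1.continuousOn hρ_pos
    (continuousOn_characteristic hgC1.continuousOn ht.2 htx) fun s hs => by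
      have hsT : s ∈ Ioo 0 T := ⟨hs.1, hs.2.trans_le ht.2⟩
      rw [← boundary_div_mass_eq_hazard_rate hf0C1.continuousOn hgnonneg hgC1 hgmass hbdry hinit
        hpde hsT]
      exact hasDerivAt_characteristic_of_damped_transport hgC1 hpde hsT (hs.2.trans htx)
  simp only [add_sub_cancel_right, sub_zero, hf0norm, mul_one] at hsolution
  rw [hsolution, hinit _ (add_pos hx ht0), hρ, mul_comm]

/-- uniqueness for the kinetic equation.
If `g` is a nonnegative `C¹` solution on `(0,∞) × [0,T]` of
`∂_t g − ∂_x g = −(g(0,t)/∫_0^∞ g(y,t) dy) g(x,t)` with positive mass,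
initial data `f0` and boundary value `g 0 t` given by continuous extension,
and `ρ T > 0`, then `g x t = ρ t * f0 (x + t)`. -/
theorem kinetic_equation_uniqueness
    (f0 : ℝ → ℝ)
    (hf0nonneg : ∀ x ∈ Ioi (0:ℝ), 0 ≤ f0 x)
    (hf0C1 : ContDiffOn ℝ 1 f0 (Ioi 0))
    (hf0int : IntegrableOn f0 (Ioi 0))
    (hf0norm : ∫ y in Ioi (0:ℝ), f0 y = 1)
    (ρ : ℝ → ℝ) (hρ : ∀ t, ρ t = ∫ y in Ioi t, f0 y)
    (T : ℝ) (hT : 0 < T) (hρT : 0 < ρ T)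
    (g : ℝ → ℝ → ℝ)
    (hgnonneg : ∀ x ∈ Ioi (0:ℝ), ∀ t ∈ Icc (0:ℝ) T, 0 ≤ g x t)
    (hgC1 : ContDiffOn ℝ 1 (fun p : ℝ × ℝ => g p.1 p.2) (Ioi 0 ×ˢ Icc 0 T))
    (hgint : ∀ t ∈ Icc (0:ℝ) T, IntegrableOn (fun x => g x t) (Ioi 0))
    (hgmass : ∀ t ∈ Icc (0:ℝ) T, 0 < ∫ y in Ioi (0:ℝ), g y t)
    (hbdry : ∀ t ∈ Icc (0:ℝ) T, ContinuousWithinAt (fun x => g x t) (Ioi 0) 0)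
    (hinit : ∀ x ∈ Ioi (0:ℝ), g x 0 = f0 x)
    (hpde : ∀ x ∈ Ioi (0:ℝ), ∀ t ∈ Ioo (0:ℝ) T,
      deriv (fun s => g x s) t - deriv (fun y => g y t) x
        = -(g 0 t / ∫ y in Ioi (0:ℝ), g y t) * g x t) :
    ∀ x ∈ Ioi (0:ℝ), ∀ t ∈ Icc (0:ℝ) T, g x t = ρ t * f0 (x + t) :=
  kinetic_equation_uniqueness_general f0 hf0nonneg hf0C1 hf0int hf0norm ρ hρ T hρT g hgnonneg hgC1
    hgmass hbdry hinit hpde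
end

section
/- Define g_{m,r}(z) = exp(z m φ(r/m) + (z²/2) m ψ(r/m)) for integers m ≥ 1, 0 ≤ r ≤ m and real z, where φ(x) = x² and ψ(x) = 2x²(1−x)². Fix u > 0. Then there exists a constant C = C(u) > 0 such that for all integers n ≥ 2, all 2 ≤ m ≤ n, all 1 ≤ r ≤ m−2, and all real z with |z|·√n ≤ u, one has (1 − r/(m−1)) g_{m−2,r}(z) + (r/(m−1)) g_{m−2,r−1}(z) = g_{m,r}(z) · e^{θ} for some real θ with |θ| ≤ C |z| / m; and for r = 0 the same holds with the single term g_{m−2,0}(z) in place of the convex combination. -/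
set_option maxHeartbeats 1600000


open MeasureTheory Set

/-- The Gaussian ansatz `g_{m,r}(z) = exp(z m φ(r/m) + (z²/2) m ψ(r/m))`,
with `φ(x) = x²` and `ψ(x) = 2x²(1−x)²`. -/
noncomputable def urnG (m r : ℕ) (z : ℝ) : ℝ :=
  Real.exp (z * m * ((r : ℝ) / m) ^ 2
    + z ^ 2 / 2 * m * (2 * ((r : ℝ) / m) ^ 2 * (1 - (r : ℝ) / m) ^ 2))

lemma denom_pos (p : ℝ) (hp0 : 0 ≤ p) (hp1 : p ≤ 1) (x : ℝ) :
    0 < 1 - p + p * Real.exp x := by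
  rcases le_or_gt 1 (Real.exp x) with h | h
  · nlinarith [Real.exp_pos x]
  · nlinarith [Real.exp_pos x]


lemma log_taylor_bound (p D : ℝ) (hp0 : 0 ≤ p) (hp1 : p ≤ 1) (hD : |D| ≤ 1) :
    |Real.log (1 - p + p * Real.exp D) - (p * D + p * (1 - p) * D ^ 2 / 2)| ≤ |D| ^ 3 := by
  set F : ℝ → ℝ := fun x => Real.log (1 - p + p * Real.exp x) - (p * x + p * (1 - p) * x ^ 2 / 2)
    with hF
  set G : ℝ → ℝ := fun x => p * Real.exp x / (1 - p + p * Real.exp x) - (p + p * (1 - p) * x)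
    with hG
  have hd : ∀ x : ℝ, 0 < 1 - p + p * Real.exp x := denom_pos p hp0 hp1
  have hF' : ∀ x : ℝ, HasDerivAt F (G x) x := by
    intro x
    have h1 : HasDerivAt (fun x => 1 - p + p * Real.exp x) (p * Real.exp x) x :=
      ((Real.hasDerivAt_exp x).const_mul p).const_add (1 - p)
    have h2 := h1.log (ne_of_gt (hd x))
    have h3 : HasDerivAt (fun x : ℝ => p * x + p * (1 - p) * x ^ 2 / 2)
        (p + p * (1 - p) * x) x := by
      have h4 := ((hasDerivAt_id x).const_mul p).add
        (((hasDerivAt_pow 2 x).const_mul (p * (1 - p))).div_const 2)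
      refine h4.congr_deriv ?_
      ring
    exact h2.sub h3
  have hG' : ∀ x : ℝ, HasDerivAt G
      (p * (1 - p) * Real.exp x / (1 - p + p * Real.exp x) ^ 2 - p * (1 - p)) x := by
    intro x
    have h1 : HasDerivAt (fun x => 1 - p + p * Real.exp x) (p * Real.exp x) x :=
      ((Real.hasDerivAt_exp x).const_mul p).const_add (1 - p)
    have hn : HasDerivAt (fun x => p * Real.exp x) (p * Real.exp x) x :=
      (Real.hasDerivAt_exp x).const_mul p
    have h2 := hn.div h1 (ne_of_gt (hd x))
    have h3 : HasDerivAt (fun x : ℝ => p + p * (1 - p) * x) (p * (1 - p)) x := by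
      have h4 := ((hasDerivAt_id x).const_mul (p * (1 - p))).const_add p
      refine h4.congr_deriv ?_
      simp
    refine (h2.sub h3).congr_deriv ?_
    have := ne_of_gt (hd x)
    field_simp
    ring
  -- bound on G' over Icc (-|D|) |D|
  have hG'bound : ∀ x ∈ Icc (-|D|) |D|,
      ‖p * (1 - p) * Real.exp x / (1 - p + p * Real.exp x) ^ 2 - p * (1 - p)‖ ≤ 3 / 4 * |D| := by
    intro x hx
    have hx1 : |x| ≤ |D| := abs_le.mpr ⟨hx.1, hx.2⟩
    have hx2 : |x| ≤ 1 := hx1.trans hD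
    have hdx := hd x
    have hpq : p * (1 - p) ≤ 1 / 4 := by nlinarith [sq_nonneg (p - 1/2)]
    have hpq0 : 0 ≤ p * (1 - p) := by nlinarith
    -- e^{x - |x|} ≤ d^2 ≤ e^{x + |x|}
    have hlow : Real.exp (x - |x|) ≤ (1 - p + p * Real.exp x) ^ 2 := by
      rcases le_or_gt 0 x with h | h
      · rw [abs_of_nonneg h]
        simp only [sub_self, Real.exp_zero]
        have hd1 : 1 ≤ 1 - p + p * Real.exp x := by
          have := mul_nonneg hp0 (by linarith [Real.one_le_exp h] : (0:ℝ) ≤ Real.exp x - 1)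
          nlinarith
        nlinarith
      · rw [abs_of_neg h]
        have hxx : x - -x = x + x := by ring
        rw [hxx, Real.exp_add]
        have he1 : Real.exp x ≤ 1 := Real.exp_le_one_iff.mpr h.le
        have hd1 : Real.exp x ≤ 1 - p + p * Real.exp x := by
          have := mul_nonneg (by linarith : (0:ℝ) ≤ 1 - p) (by linarith : (0:ℝ) ≤ 1 - Real.exp x)
          nlinarith
        nlinarith [Real.exp_pos x]
    have hhigh : (1 - p + p * Real.exp x) ^ 2 ≤ Real.exp (x + |x|) := by
      rcases le_or_gt 0 x with h | h
      · rw [abs_of_nonneg h, Real.exp_add]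
        have he1 : 1 ≤ Real.exp x := Real.one_le_exp h
        have hd1 : 1 - p + p * Real.exp x ≤ Real.exp x := by
          have := mul_nonneg (by linarith : (0:ℝ) ≤ 1 - p) (by linarith : (0:ℝ) ≤ Real.exp x - 1)
          nlinarith
        nlinarith [Real.exp_pos x, hd x]
      · rw [abs_of_neg h]
        simp only [add_neg_cancel, Real.exp_zero]
        have he1 : Real.exp x ≤ 1 := Real.exp_le_one_iff.mpr h.le
        have hd1 : 1 - p + p * Real.exp x ≤ 1 := by
          have := mul_nonneg hp0 (by linarith : (0:ℝ) ≤ 1 - Real.exp x)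
          nlinarith
        nlinarith [hd x]
    -- hence e^{-|x|} ≤ e^x / d^2 ≤ e^{|x|}
    have hd2 : (0:ℝ) < (1 - p + p * Real.exp x) ^ 2 := by positivity
    have hr1 : Real.exp x / (1 - p + p * Real.exp x) ^ 2 ≤ Real.exp |x| := by
      rw [div_le_iff₀ hd2]
      calc Real.exp x = Real.exp (x - |x|) * Real.exp |x| := by
            rw [← Real.exp_add]; ring_nf
        _ ≤ (1 - p + p * Real.exp x) ^ 2 * Real.exp |x| := by
            have := Real.exp_pos |x|
            nlinarith
        _ = Real.exp |x| * (1 - p + p * Real.exp x) ^ 2 := by ring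
    have hr2 : Real.exp (-|x|) ≤ Real.exp x / (1 - p + p * Real.exp x) ^ 2 := by
      rw [le_div_iff₀ hd2]
      calc Real.exp (-|x|) * (1 - p + p * Real.exp x) ^ 2
          ≤ Real.exp (-|x|) * Real.exp (x + |x|) := by
            have := Real.exp_pos (-|x|)
            nlinarith
        _ = Real.exp x := by rw [← Real.exp_add]; ring_nf
    -- |e^x/d^2 - 1| ≤ e^{|x|} - 1 ≤ 3|x|
    have habs : |Real.exp x / (1 - p + p * Real.exp x) ^ 2 - 1| ≤ Real.exp |x| - 1 := by
      rw [abs_le]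
      constructor
      · have hprod : Real.exp |x| * Real.exp (-|x|) = 1 := by
          rw [← Real.exp_add]; simp
        have hsq := mul_nonneg (sq_nonneg (Real.exp |x| - 1)) (Real.exp_pos (-|x|)).le
        have : 1 - Real.exp |x| ≤ Real.exp (-|x|) - 1 := by nlinarith
        linarith
      · linarith
    have hexp3 : Real.exp |x| - 1 ≤ 3 * |x| := by
      have h1 : Real.exp (-|x|) ≥ 1 - |x| := by
        have := Real.add_one_le_exp (-|x|)
        linarith
      have h2 : Real.exp |x| ≤ Real.exp 1 := Real.exp_le_exp.mpr hx2
      have h3 : Real.exp 1 ≤ 3 := by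
        have := Real.exp_one_lt_d9
        linarith
      have h4 : Real.exp |x| * Real.exp (-|x|) = 1 := by
        rw [← Real.exp_add]; simp
      nlinarith [Real.exp_pos |x|]
    have key : ‖p * (1 - p) * Real.exp x / (1 - p + p * Real.exp x) ^ 2 - p * (1 - p)‖
        = p * (1 - p) * |Real.exp x / (1 - p + p * Real.exp x) ^ 2 - 1| := by
      rw [Real.norm_eq_abs]
      rw [show p * (1 - p) * Real.exp x / (1 - p + p * Real.exp x) ^ 2 - p * (1 - p)
          = p * (1 - p) * (Real.exp x / (1 - p + p * Real.exp x) ^ 2 - 1) by ring]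
      rw [abs_mul, abs_of_nonneg hpq0]
    rw [key]
    calc p * (1 - p) * |Real.exp x / (1 - p + p * Real.exp x) ^ 2 - 1|
        ≤ (1/4) * (3 * |x|) := by
          have := abs_nonneg (Real.exp x / (1 - p + p * Real.exp x) ^ 2 - 1)
          nlinarith
      _ ≤ 3 / 4 * |D| := by nlinarith [abs_nonneg x]
  -- first MVT: |G x| ≤ 3/4 |D| * |x| on the interval
  have hconv : Convex ℝ (Icc (-|D|) |D|) := convex_Icc _ _
  have hmemD : D ∈ Icc (-|D|) |D| := ⟨neg_abs_le D, le_abs_self D⟩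
  have hmem0 : (0:ℝ) ∈ Icc (-|D|) |D| := ⟨neg_nonpos.mpr (abs_nonneg D), abs_nonneg D⟩
  have hGbound : ∀ x ∈ Icc (-|D|) |D|, ‖G x‖ ≤ 3 / 4 * |D| ^ 2 := by
    intro x hx
    have := hconv.norm_image_sub_le_of_norm_hasDerivWithin_le
      (fun y _ => (hG' y).hasDerivWithinAt) hG'bound hmem0 hx
    have hG0 : G 0 = 0 := by simp [hG]
    rw [hG0, sub_zero, sub_zero] at this
    calc ‖G x‖ ≤ 3 / 4 * |D| * ‖x‖ := this
      _ ≤ 3 / 4 * |D| ^ 2 := by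
          rw [Real.norm_eq_abs]
          have hx1 : |x| ≤ |D| := abs_le.mpr ⟨hx.1, hx.2⟩
          nlinarith [abs_nonneg D, abs_nonneg x]
  -- second MVT
  have hfinal := hconv.norm_image_sub_le_of_norm_hasDerivWithin_le
    (fun y _ => (hF' y).hasDerivWithinAt) hGbound hmem0 hmemD
  have hF0 : F 0 = 0 := by simp [hF]
  rw [hF0, sub_zero, sub_zero, Real.norm_eq_abs, Real.norm_eq_abs] at hfinal
  have : F D = Real.log (1 - p + p * Real.exp D) - (p * D + p * (1 - p) * D ^ 2 / 2) := rfl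
  rw [this] at hfinal
  calc |Real.log (1 - p + p * Real.exp D) - (p * D + p * (1 - p) * D ^ 2 / 2)|
      ≤ 3 / 4 * |D| ^ 2 * |D| := hfinal
    _ ≤ |D| ^ 3 := by nlinarith [abs_nonneg D]

section auxbounds
variable {M R : ℝ}

private lemma aux_a1 (hR1 : 1 ≤ R) (hRM : R ≤ M-2) (hM3 : 3 ≤ M) :
    |2*R^2/(M*(M-2))| ≤ 2*M := by
  have hM0 : (0:ℝ) < M := by linarith
  have hM2 : (0:ℝ) < M - 2 := by linarith
  rw [abs_of_nonneg (by positivity)]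
  rw [div_le_iff₀ (by positivity : (0:ℝ) < M*(M-2))]
  have k1 : R*R ≤ (M-2)*(M-2) := mul_le_mul hRM hRM (by linarith) (by linarith)
  have k2 : (M-2)*(M-2) ≤ M^2*(M-2) := by
    have : M - 2 ≤ M^2 := by nlinarith
    exact mul_le_mul_of_nonneg_right this hM2.le
  nlinarith [k1, k2]

private lemma aux_a2 (hR1 : 1 ≤ R) (hRM : R ≤ M-2) (hM3 : 3 ≤ M) :
    |(R*(M-2-R))^2/(M-2)^3 - (R*(M-R))^2/M^3| ≤ M/8 := by
  have hM0 : (0:ℝ) < M := by linarith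
  have hM2 : (0:ℝ) < M - 2 := by linarith
  have k1 : R*(M-2-R) ≤ (M-2)^2/4 := by nlinarith [sq_nonneg (M-2-2*R)]
  have k10 : (0:ℝ) ≤ R*(M-2-R) := mul_nonneg (by linarith) (by linarith)
  have k2 : R*(M-R) ≤ M^2/4 := by nlinarith [sq_nonneg (M-2*R)]
  have k20 : (0:ℝ) ≤ R*(M-R) := mul_nonneg (by linarith) (by linarith)
  have h1 : (R*(M-2-R))^2/(M-2)^3 ≤ M/16 := by
    rw [div_le_iff₀ (by positivity)]
    have q1 : (R*(M-2-R))^2 ≤ ((M-2)^2/4)^2 := pow_le_pow_left₀ k10 k1 2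
    have q2 : ((M-2)^2/4)^2 ≤ M/16*(M-2)^3 := by nlinarith [pow_nonneg hM2.le 3]
    linarith
  have h2 : (R*(M-R))^2/M^3 ≤ M/16 := by
    rw [div_le_iff₀ (by positivity)]
    have q1 : (R*(M-R))^2 ≤ (M^2/4)^2 := pow_le_pow_left₀ k20 k2 2
    have q2 : (M^2/4)^2 ≤ M/16*M^3 := by nlinarith [pow_nonneg hM0.le 3]
    linarith
  have h3 : (0:ℝ) ≤ (R*(M-2-R))^2/(M-2)^3 := by positivity
  have h4 : (0:ℝ) ≤ (R*(M-R))^2/M^3 := by positivity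
  rw [abs_le]; constructor <;> linarith

private lemma aux_b1 (hR1 : 1 ≤ R) (hRM : R ≤ M-2) (hM3 : 3 ≤ M) :
    |(R-1)^2/(M-2) - R^2/M| ≤ 2*M := by
  have hM0 : (0:ℝ) < M := by linarith
  have hM2 : (0:ℝ) < M - 2 := by linarith
  have h1 : (R-1)^2/(M-2) ≤ M := by
    rw [div_le_iff₀ hM2]
    nlinarith [mul_le_mul (by linarith : R-1 ≤ M-2)
      (by linarith : R-1 ≤ M-2) (by linarith) (by linarith : (0:ℝ) ≤ M-2)]
  have h2 : R^2/M ≤ M := by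
    rw [div_le_iff₀ hM0]
    nlinarith [mul_le_mul hRM hRM (by linarith) (by linarith : (0:ℝ) ≤ M-2)]
  have h3 : (0:ℝ) ≤ (R-1)^2/(M-2) := by positivity
  have h4 : (0:ℝ) ≤ R^2/M := by positivity
  rw [abs_le]; constructor <;> linarith

private lemma aux_b2 (hR1 : 1 ≤ R) (hRM : R ≤ M-2) (hM3 : 3 ≤ M) :
    |((R-1)*(M-1-R))^2/(M-2)^3 - (R*(M-R))^2/M^3| ≤ M/8 := by
  have hM0 : (0:ℝ) < M := by linarith
  have hM2 : (0:ℝ) < M - 2 := by linarith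
  have k1 : (R-1)*(M-1-R) ≤ (M-2)^2/4 := by nlinarith [sq_nonneg (M-2*R)]
  have k10 : (0:ℝ) ≤ (R-1)*(M-1-R) := mul_nonneg (by linarith) (by linarith)
  have k2 : R*(M-R) ≤ M^2/4 := by nlinarith [sq_nonneg (M-2*R)]
  have k20 : (0:ℝ) ≤ R*(M-R) := mul_nonneg (by linarith) (by linarith)
  have h1 : ((R-1)*(M-1-R))^2/(M-2)^3 ≤ M/16 := by
    rw [div_le_iff₀ (by positivity)]
    have q1 : ((R-1)*(M-1-R))^2 ≤ ((M-2)^2/4)^2 := pow_le_pow_left₀ k10 k1 2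
    have q2 : ((M-2)^2/4)^2 ≤ M/16*(M-2)^3 := by nlinarith [pow_nonneg hM2.le 3]
    linarith
  have h2 : (R*(M-R))^2/M^3 ≤ M/16 := by
    rw [div_le_iff₀ (by positivity)]
    have q1 : (R*(M-R))^2 ≤ (M^2/4)^2 := pow_le_pow_left₀ k20 k2 2
    have q2 : (M^2/4)^2 ≤ M/16*M^3 := by nlinarith [pow_nonneg hM0.le 3]
    linarith
  have h3 : (0:ℝ) ≤ ((R-1)*(M-1-R))^2/(M-2)^3 := by positivity
  have h4 : (0:ℝ) ≤ (R*(M-R))^2/M^3 := by positivity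
  rw [abs_le]; constructor <;> linarith

private lemma aux_d1 (hR1 : 1 ≤ R) (hRM : R ≤ M-2) (hM3 : 3 ≤ M) :
    |((R-1)^2/(M-2) - R^2/M) - 2*R^2/(M*(M-2))| ≤ 2 := by
  have hM0 : (0:ℝ) < M := by linarith
  have hM2 : (0:ℝ) < M - 2 := by linarith
  have hd1eq : ((R-1)^2/(M-2) - R^2/M) - 2*R^2/(M*(M-2)) = -(2*R-1)/(M-2) := by
    field_simp
    ring
  rw [hd1eq, abs_div, abs_of_pos hM2, div_le_iff₀ hM2]
  have h0 : |(-(2*R-1))| = 2*R-1 := by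
    rw [abs_neg, abs_of_nonneg (by linarith)]
  rw [h0]; linarith

private lemma aux_d2 (hR1 : 1 ≤ R) (hRM : R ≤ M-2) (hM3 : 3 ≤ M) :
    |(((R-1)*(M-1-R))^2/(M-2)^3 - (R*(M-R))^2/M^3)
      - ((R*(M-2-R))^2/(M-2)^3 - (R*(M-R))^2/M^3)| ≤ 1/2 := by
  have hM0 : (0:ℝ) < M := by linarith
  have hM2 : (0:ℝ) < M - 2 := by linarith
  have hd2eq : (((R-1)*(M-1-R))^2/(M-2)^3 - (R*(M-R))^2/M^3)
      - ((R*(M-2-R))^2/(M-2)^3 - (R*(M-R))^2/M^3)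
      = (((R-1)*(M-1-R) - R*(M-2-R)) * ((R-1)*(M-1-R) + R*(M-2-R)))/(M-2)^3 := by
    field_simp
    ring
  have hABpos : (0:ℝ) ≤ (R-1)*(M-1-R) + R*(M-2-R) :=
    add_nonneg (mul_nonneg (by linarith) (by linarith))
      (mul_nonneg (by linarith) (by linarith))
  have hABsum : (R-1)*(M-1-R) + R*(M-2-R) ≤ (M-2)^2/2 := by
    nlinarith [sq_nonneg (2*R-M), sq_nonneg (2*R-M+2)]
  have hABdiff : |(R-1)*(M-1-R) - R*(M-2-R)| ≤ M-2 := by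
    have he : (R-1)*(M-1-R) - R*(M-2-R) = 2*R - M + 1 := by ring
    rw [he, abs_le]; constructor <;> linarith
  rw [hd2eq, abs_div, abs_of_pos (pow_pos hM2 3), div_le_iff₀ (pow_pos hM2 3), abs_mul,
    abs_of_nonneg hABpos]
  calc |(R-1)*(M-1-R) - R*(M-2-R)| * ((R-1)*(M-1-R) + R*(M-2-R))
      ≤ (M-2) * ((M-2)^2/2) := mul_le_mul hABdiff hABsum hABpos (by linarith)
    _ = 1/2 * (M-2)^3 := by ring

private lemma aux_c1 (hR1 : 1 ≤ R) (hRM : R ≤ M-2) (hM3 : 3 ≤ M) :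
    |2*R^2/(M*(M-2)) + (R/(M-1))*(((R-1)^2/(M-2) - R^2/M) - 2*R^2/(M*(M-2)))| ≤ 2/M := by
  have hM0 : (0:ℝ) < M := by linarith
  have hM1 : (0:ℝ) < M - 1 := by linarith
  have hM2 : (0:ℝ) < M - 2 := by linarith
  have hc1eq : 2*R^2/(M*(M-2)) + (R/(M-1))*(((R-1)^2/(M-2) - R^2/M) - 2*R^2/(M*(M-2)))
      = R*(M-2*R)/(M*(M-1)*(M-2)) := by
    field_simp
    ring
  rw [hc1eq, abs_div, abs_of_pos (by positivity : (0:ℝ) < M*(M-1)*(M-2)),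
    div_le_div_iff₀ (by positivity : (0:ℝ) < M*(M-1)*(M-2)) hM0]
  have h1 : |R*(M-2*R)| ≤ R*M := by
    rw [abs_mul, abs_of_nonneg (by linarith : (0:ℝ) ≤ R)]
    have h2 : |M-2*R| ≤ M := abs_le.mpr ⟨by linarith, by linarith⟩
    exact mul_le_mul_of_nonneg_left h2 (by linarith)
  have k3 : (M-2)*M^2 ≤ 2*(M*(M-1)*(M-2)) := by
    nlinarith [mul_nonneg (mul_nonneg hM0.le hM2.le) hM2.le]
  have k4 : |R*(M-2*R)| * M ≤ R*M*M := mul_le_mul_of_nonneg_right h1 hM0.le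
  have k5 : R*M*M ≤ (M-2)*M^2 := by
    nlinarith [mul_le_mul_of_nonneg_right hRM (sq_nonneg M)]
  linarith

private lemma aux_c2 (hR1 : 1 ≤ R) (hRM : R ≤ M-2) (hM3 : 3 ≤ M) :
    |((R*(M-2-R))^2/(M-2)^3 - (R*(M-R))^2/M^3)
      + (R/(M-1))*((((R-1)*(M-1-R))^2/(M-2)^3 - (R*(M-R))^2/M^3)
          - ((R*(M-2-R))^2/(M-2)^3 - (R*(M-R))^2/M^3))
      + (R/(M-1))*(1-R/(M-1))*((((R-1)^2/(M-2) - R^2/M) - 2*R^2/(M*(M-2)))^2)/2| ≤ 1/M := by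
  have hM0 : (0:ℝ) < M := by linarith
  have hM1 : (0:ℝ) < M - 1 := by linarith
  have hM2 : (0:ℝ) < M - 2 := by linarith
  have hc2eq : ((R*(M-2-R))^2/(M-2)^3 - (R*(M-R))^2/M^3)
      + (R/(M-1))*((((R-1)*(M-1-R))^2/(M-2)^3 - (R*(M-R))^2/M^3)
          - ((R*(M-2-R))^2/(M-2)^3 - (R*(M-R))^2/M^3))
      + (R/(M-1))*(1-R/(M-1))*((((R-1)^2/(M-2) - R^2/M) - 2*R^2/(M*(M-2)))^2)/2
      = (M^6*R - 5/2*M^5*R - 10*M^5*R^2 + 3/2*M^4*R + 59/2*M^4*R^2 + 24*M^4*R^3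
        - 27*M^3*R^2 - 66*M^3*R^3 - 16*M^3*R^4 + 8*M^2*R^2 + 56*M^2*R^3 + 38*M^2*R^4
        - 16*M*R^3 - 28*M*R^4 + 8*R^4) / (M^3*(M-1)^2*(M-2)^3) := by
    field_simp
    ring
  have hPb : |M^6*R - 5/2*M^5*R - 10*M^5*R^2 + 3/2*M^4*R + 59/2*M^4*R^2 + 24*M^4*R^3
        - 27*M^3*R^2 - 66*M^3*R^3 - 16*M^3*R^4 + 8*M^2*R^2 + 56*M^2*R^3 + 38*M^2*R^4
        - 16*M*R^3 - 28*M*R^4 + 8*R^4| ≤ M^2*(M-1)^2*(M-2)^3 := by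
    obtain ⟨x, hx⟩ : ∃ x:ℝ, R - 1 = x^2 :=
      ⟨Real.sqrt (R-1), (Real.sq_sqrt (by linarith)).symm⟩
    obtain ⟨y, hy⟩ : ∃ y:ℝ, M - 2 - R = y^2 :=
      ⟨Real.sqrt (M-2-R), (Real.sq_sqrt (by linarith)).symm⟩
    have hMx : M = x^2 + y^2 + 3 := by linarith
    have hRx : R = x^2 + 1 := by linarith
    rw [abs_le]
    constructor
    · have he : M^2*(M-1)^2*(M-2)^3 + (M^6*R - 5/2*M^5*R - 10*M^5*R^2 + 3/2*M^4*R
          + 59/2*M^4*R^2 + 24*M^4*R^3 - 27*M^3*R^2 - 66*M^3*R^3 - 16*M^3*R^4 + 8*M^2*R^2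
          + 56*M^2*R^3 + 38*M^2*R^4 - 16*M*R^3 - 28*M*R^4 + 8*R^4)
          = (67/2) + (257/2)*y^2 + 256*y^4 + 303*y^6 + (409/2)*y^8 + (151/2)*y^10 + 14*y^12 + 1*y^14 + (333/2)*x^2 + (983/2)*x^2*y^2 + 696*x^2*y^4 + 607*x^2*y^6 + (615/2)*x^2*y^8 + (159/2)*x^2*y^10 + 8*x^2*y^12 + 396*x^4 + 936*x^4*y^2 + 890*x^4*y^4 + 472*x^4*y^6 + 139*x^4*y^8 + 17*x^4*y^10 + 497*x^6 + 979*x^6*y^2 + 660*x^6*y^4 + 199*x^6*y^6 + 24*x^6*y^8 + (651/2)*x^8 + (1049/2)*x^8*y^2 + 242*x^8*y^4 + 35*x^8*y^6 + (209/2)*x^10 + (259/2)*x^10*y^2 + 32*x^10*y^4 + 13*x^12 + 11*x^12*y^2 := by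
        rw [hMx, hRx]; ring
      have hpos : (0:ℝ) ≤ (67/2) + (257/2)*y^2 + 256*y^4 + 303*y^6 + (409/2)*y^8 + (151/2)*y^10 + 14*y^12 + 1*y^14 + (333/2)*x^2 + (983/2)*x^2*y^2 + 696*x^2*y^4 + 607*x^2*y^6 + (615/2)*x^2*y^8 + (159/2)*x^2*y^10 + 8*x^2*y^12 + 396*x^4 + 936*x^4*y^2 + 890*x^4*y^4 + 472*x^4*y^6 + 139*x^4*y^8 + 17*x^4*y^10 + 497*x^6 + 979*x^6*y^2 + 660*x^6*y^4 + 199*x^6*y^6 + 24*x^6*y^8 + (651/2)*x^8 + (1049/2)*x^8*y^2 + 242*x^8*y^4 + 35*x^8*y^6 + (209/2)*x^10 + (259/2)*x^10*y^2 + 32*x^10*y^4 + 13*x^12 + 11*x^12*y^2 := by positivity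
      linarith
    · have he : M^2*(M-1)^2*(M-2)^3 - (M^6*R - 5/2*M^5*R - 10*M^5*R^2 + 3/2*M^4*R
          + 59/2*M^4*R^2 + 24*M^4*R^3 - 27*M^3*R^2 - 66*M^3*R^3 - 16*M^3*R^4 + 8*M^2*R^2
          + 56*M^2*R^3 + 38*M^2*R^4 - 16*M*R^3 - 28*M*R^4 + 8*R^4)
          = (77/2) + (415/2)*y^2 + 394*y^4 + 371*y^6 + (399/2)*y^8 + (129/2)*y^10 + 12*y^12 + 1*y^14 + (339/2)*x^2 + (1617/2)*x^2*y^2 + 1326*x^2*y^4 + 1009*x^2*y^6 + (785/2)*x^2*y^8 + (153/2)*x^2*y^10 + 6*x^2*y^12 + 254*x^4 + 1086*x^4*y^2 + 1534*x^4*y^4 + 928*x^4*y^6 + 251*x^4*y^8 + 25*x^4*y^10 + 177*x^6 + 637*x^6*y^2 + 740*x^6*y^4 + 321*x^6*y^6 + 46*x^6*y^8 + (157/2)*x^8 + (351/2)*x^8*y^2 + 148*x^8*y^4 + 35*x^8*y^6 + (71/2)*x^10 + (53/2)*x^10*y^2 + 10*x^10*y^4 + 13*x^12 + 3*x^12*y^2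 + 2*x^14 := by
        rw [hMx, hRx]; ring
      have hpos : (0:ℝ) ≤ (77/2) + (415/2)*y^2 + 394*y^4 + 371*y^6 + (399/2)*y^8 + (129/2)*y^10 + 12*y^12 + 1*y^14 + (339/2)*x^2 + (1617/2)*x^2*y^2 + 1326*x^2*y^4 + 1009*x^2*y^6 + (785/2)*x^2*y^8 + (153/2)*x^2*y^10 + 6*x^2*y^12 + 254*x^4 + 1086*x^4*y^2 + 1534*x^4*y^4 + 928*x^4*y^6 + 251*x^4*y^8 + 25*x^4*y^10 + 177*x^6 + 637*x^6*y^2 + 740*x^6*y^4 + 321*x^6*y^6 + 46*x^6*y^8 + (157/2)*x^8 + (351/2)*x^8*y^2 + 148*x^8*y^4 + 35*x^8*y^6 + (71/2)*x^10 + (53/2)*x^10*y^2 + 10*x^10*y^4 + 13*x^12 + 3*x^12*y^2 + 2*x^14 := by positivity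
      linarith
  rw [hc2eq, abs_div, abs_of_pos (by positivity : (0:ℝ) < M^3*(M-1)^2*(M-2)^3),
    div_le_div_iff₀ (by positivity : (0:ℝ) < M^3*(M-1)^2*(M-2)^3) hM0]
  have k1 := mul_le_mul_of_nonneg_right hPb hM0.le
  linarith [k1]

private lemma aux_pq {p : ℝ} (h0 : 0 ≤ p) (h1 : p ≤ 1) :
    p*(1-p) ≤ 1/4 ∧ 0 ≤ p*(1-p) := by
  constructor
  · nlinarith [sq_nonneg (p - 1/2)]
  · nlinarith

private lemma aux_zsmall {v u : ℝ} (hu : 0 < u) (h : v*(8*(1+u)) ≤ u) (hv : 0 ≤ v) :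
    v ≤ 1/8 := by nlinarith

end auxbounds

/-- one-step error of the Gaussian ansatz under the urn recurrence.
Fix `u > 0`. There is `C = C(u) > 0` such that for all `2 ≤ m ≤ n`, `r ≤ m − 2` and real `z`
with `|z| √n ≤ u`, one has
`(1 − r/(m−1)) g_{m−2,r}(z) + (r/(m−1)) g_{m−2,r−1}(z) = g_{m,r}(z) e^θ`
with `|θ| ≤ C |z| / m` (for `r = 0` the second term has zero coefficient, so the left side
reduces to the single term `g_{m−2,0}(z)`). -/
theorem urn_ansatz_one_step (u : ℝ) (hu : 0 < u) :
    ∃ C > (0:ℝ), ∀ n m r : ℕ, 2 ≤ n → 2 ≤ m → m ≤ n → r ≤ m - 2 →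
      ∀ z : ℝ, |z| * Real.sqrt n ≤ u →
      ∃ θ : ℝ, |θ| ≤ C * |z| / m ∧
        (1 - (r : ℝ) / ((m : ℝ) - 1)) * urnG (m - 2) r z
            + ((r : ℝ) / ((m : ℝ) - 1)) * urnG (m - 2) (r - 1) z
          = urnG m r z * Real.exp θ := by
  refine ⟨4096*(1+u)^4*(2+u/8) + (2 + u + u^2/4 + u^3/32 + (2+u/2)^3*u^2) + 1,
    by positivity, ?_⟩
  set C : ℝ := 4096*(1+u)^4*(2+u/8) + (2 + u + u^2/4 + u^3/32 + (2+u/2)^3*u^2) + 1 with hC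
  intro n m r hn hm hmn hr z hz
  have hCpos : (0:ℝ) < C := by rw [hC]; positivity
  have hm0 : (0:ℝ) < m := by positivity
  rcases Nat.eq_zero_or_pos r with hr0 | hrpos
  · subst hr0
    refine ⟨0, by rw [abs_zero]; positivity, ?_⟩
    norm_num [urnG]
  have hm3 : 3 ≤ m := by omega
  have hcast1 : ((m - 2 : ℕ) : ℝ) = (m:ℝ) - 2 := by
    push_cast [Nat.cast_sub hm]; ring
  have hcast2 : ((r - 1 : ℕ) : ℝ) = (r:ℝ) - 1 := by
    push_cast [Nat.cast_sub hrpos]; ring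
  have hGa : urnG (m-2) r z = Real.exp (z*((m:ℝ)-2)*((r:ℝ)/((m:ℝ)-2))^2
      + z^2/2*((m:ℝ)-2)*(2*((r:ℝ)/((m:ℝ)-2))^2*(1-(r:ℝ)/((m:ℝ)-2))^2)) := by
    rw [urnG, hcast1]
  have hGb : urnG (m-2) (r-1) z = Real.exp (z*((m:ℝ)-2)*(((r:ℝ)-1)/((m:ℝ)-2))^2
      + z^2/2*((m:ℝ)-2)*(2*(((r:ℝ)-1)/((m:ℝ)-2))^2*(1-((r:ℝ)-1)/((m:ℝ)-2))^2)) := by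
    rw [urnG, hcast1, hcast2]
  have hGm : urnG m r z = Real.exp (z*(m:ℝ)*((r:ℝ)/(m:ℝ))^2
      + z^2/2*(m:ℝ)*(2*((r:ℝ)/(m:ℝ))^2*(1-(r:ℝ)/(m:ℝ))^2)) := by
    rw [urnG]
  set M : ℝ := (m:ℝ) with hMdef
  set R : ℝ := (r:ℝ) with hRdef
  have hM3 : (3:ℝ) ≤ M := by rw [hMdef]; exact_mod_cast hm3
  have hR1 : (1:ℝ) ≤ R := by rw [hRdef]; exact_mod_cast hrpos
  have hRM : R ≤ M - 2 := by
    have h1 : (r:ℝ) ≤ ((m - 2 : ℕ) : ℝ) := by exact_mod_cast hr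
    rw [hcast1] at h1; exact h1
  have hM0 : (0:ℝ) < M := by linarith
  have hM1 : (0:ℝ) < M - 1 := by linarith
  have hM2 : (0:ℝ) < M - 2 := by linarith
  have hMn : M ≤ (n:ℝ) := by rw [hMdef]; exact_mod_cast hmn
  have hn0 : (0:ℝ) < (n:ℝ) := by positivity
  have hzu : |z| ≤ u := by
    have h1 : (1:ℝ) ≤ Real.sqrt n := by
      rw [show (1:ℝ) = Real.sqrt 1 by simp]
      apply Real.sqrt_le_sqrt
      exact_mod_cast Nat.one_le_iff_ne_zero.mpr (by omega)
    nlinarith [abs_nonneg z]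
  have hz2n : z^2 * (n:ℝ) ≤ u^2 := by
    have h1 : (|z| * Real.sqrt n)^2 ≤ u^2 := by
      apply sq_le_sq'
      · nlinarith [mul_nonneg (abs_nonneg z) (Real.sqrt_nonneg (n:ℝ))]
      · exact hz
    rw [mul_pow, sq_abs, Real.sq_sqrt hn0.le] at h1
    exact h1
  have hz2M : z^2 * M ≤ u^2 := by nlinarith [sq_nonneg z]
  have hz2u : z^2 ≤ u * |z| := by
    have : z^2 = |z| * |z| := by rw [← abs_mul, ← sq, abs_of_nonneg (sq_nonneg z)]
    rw [this]
    nlinarith [abs_nonneg z]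
  set Em : ℝ := z*M*(R/M)^2 + z^2/2*M*(2*(R/M)^2*(1-R/M)^2) with hEm
  set Ea : ℝ := z*(M-2)*(R/(M-2))^2 + z^2/2*(M-2)*(2*(R/(M-2))^2*(1-R/(M-2))^2) with hEa
  set Eb : ℝ := z*(M-2)*((R-1)/(M-2))^2 + z^2/2*(M-2)*(2*((R-1)/(M-2))^2*(1-(R-1)/(M-2))^2)
    with hEb
  set p : ℝ := R / (M-1) with hp
  set a : ℝ := Ea - Em with ha
  set b : ℝ := Eb - Em with hb
  set D : ℝ := b - a with hDdef
  have hp0 : 0 ≤ p := by rw [hp]; positivity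
  have hp1 : p < 1 := by
    rw [hp, div_lt_one hM1]; linarith
  have hdpos : 0 < 1 - p + p * Real.exp D := denom_pos p hp0 hp1.le D
  have hcomb : 0 < (1-p) * Real.exp a + p * Real.exp b := by
    have h1 : 0 < (1-p) * Real.exp a := mul_pos (by linarith) (Real.exp_pos a)
    have h2 : 0 ≤ p * Real.exp b := by positivity
    linarith
  refine ⟨Real.log ((1-p) * Real.exp a + p * Real.exp b), ?_, ?_⟩
  swap
  · rw [hGa, hGb, hGm, Real.exp_log hcomb, ha, hb, Real.exp_sub, Real.exp_sub]
    field_simp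
  -- the bound
  set θ : ℝ := Real.log ((1-p) * Real.exp a + p * Real.exp b) with hθdef
  have hθ : θ = a + Real.log (1 - p + p * Real.exp D) := by
    rw [hθdef, show (1-p) * Real.exp a + p * Real.exp b
        = Real.exp a * (1 - p + p * Real.exp D) by
      rw [show b = a + D by rw [hDdef]; ring, Real.exp_add]; ring]
    rw [Real.log_mul (Real.exp_ne_zero a) (ne_of_gt hdpos), Real.log_exp]
  have hMne : M ≠ 0 := hM0.ne'
  have hM1ne : M - 1 ≠ 0 := hM1.ne'
  have hM2ne : M - 2 ≠ 0 := hM2.ne'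
  set a1 : ℝ := 2*R^2/(M*(M-2)) with ha1
  set a2 : ℝ := (R*(M-2-R))^2/(M-2)^3 - (R*(M-R))^2/M^3 with ha2
  set b1 : ℝ := (R-1)^2/(M-2) - R^2/M with hb1
  set b2 : ℝ := ((R-1)*(M-1-R))^2/(M-2)^3 - (R*(M-R))^2/M^3 with hb2
  have hA : a = z*a1 + z^2*a2 := by
    rw [ha, ha1, ha2, hEa, hEm]
    field_simp
    ring
  have hB : b = z*b1 + z^2*b2 := by
    rw [hb, hb1, hb2, hEb, hEm]
    field_simp
    ring
  have hD : D = z*(b1-a1) + z^2*(b2-a2) := by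
    rw [hDdef, hA, hB]; ring
  clear_value C M R Em Ea Eb p a b D θ a1 a2 b1 b2
  have ha1b : |a1| ≤ 2*M := by rw [ha1]; exact aux_a1 hR1 hRM hM3
  have ha2b : |a2| ≤ M/8 := by rw [ha2]; exact aux_a2 hR1 hRM hM3
  have hb1b : |b1| ≤ 2*M := by rw [hb1]; exact aux_b1 hR1 hRM hM3
  have hb2b : |b2| ≤ M/8 := by rw [hb2]; exact aux_b2 hR1 hRM hM3
  have hd1b : |b1 - a1| ≤ 2 := by rw [hb1, ha1]; exact aux_d1 hR1 hRM hM3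
  have hd2b : |b2 - a2| ≤ 1/2 := by rw [hb2, ha2]; exact aux_d2 hR1 hRM hM3
  have hc1b : |a1 + p*(b1-a1)| ≤ 2/M := by
    rw [ha1, hb1, hp]; exact aux_c1 hR1 hRM hM3
  have hc2b : |a2 + p*(b2-a2) + p*(1-p)*(b1-a1)^2/2| ≤ 1/M := by
    rw [ha2, hb2, ha1, hb1, hp]
    have h := aux_c2 (M := M) (R := R) hR1 hRM hM3
    first
    | exact h
    | (convert h using 3 <;> ring)
  have hpq : p*(1-p) ≤ 1/4 := (aux_pq hp0 hp1.le).1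
  have hpq0 : (0:ℝ) ≤ p*(1-p) := (aux_pq hp0 hp1.le).2
  have hc3b : |p*(1-p)*(b1-a1)*(b2-a2)| ≤ 1/4 := by
    rw [abs_mul, abs_mul, abs_of_nonneg hpq0]
    have h1 : p*(1-p) * |b1-a1| ≤ 1/4*2 :=
      mul_le_mul hpq hd1b (abs_nonneg _) (by norm_num)
    have h2 : p*(1-p) * |b1-a1| * |b2-a2| ≤ (1/4*2)*(1/2) :=
      mul_le_mul h1 hd2b (abs_nonneg _) (by norm_num)
    linarith
  have hc4b : |p*(1-p)*(b2-a2)^2/2| ≤ 1/32 := by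
    rw [abs_div, abs_mul, abs_of_nonneg hpq0, abs_pow]
    have h1 : |b2-a2|^2 ≤ (1/2)^2 := pow_le_pow_left₀ (abs_nonneg _) hd2b 2
    have h2 : p*(1-p) * |b2-a2|^2 ≤ 1/4*(1/2)^2 :=
      mul_le_mul hpq h1 (by positivity) (by norm_num)
    rw [abs_of_nonneg (by norm_num : (0:ℝ) ≤ (2:ℝ))]
    rw [div_le_iff₀ (by norm_num : (0:ℝ) < (2:ℝ))]
    linarith
  have hS : a + (p*D + p*(1-p)*D^2/2)
      = z*(a1 + p*(b1-a1)) + z^2*(a2 + p*(b2-a2) + p*(1-p)*(b1-a1)^2/2)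
        + z^3*(p*(1-p)*(b1-a1)*(b2-a2)) + z^4*(p*(1-p)*(b2-a2)^2/2) := by
    rw [hA, hD]; ring
  have hDb : |D| ≤ 2 * |z| + 1/2*z^2 := by
    rw [hD]
    have e1 : |z*(b1-a1)| = |z| * |b1-a1| := abs_mul _ _
    have e2 : |z^2*(b2-a2)| = z^2 * |b2-a2| := by
      rw [abs_mul, abs_of_nonneg (sq_nonneg z)]
    calc |z*(b1-a1) + z^2*(b2-a2)| ≤ |z*(b1-a1)| + |z^2*(b2-a2)| := abs_add_le _ _
      _ = |z| * |b1-a1| + z^2 * |b2-a2| := by rw [e1, e2]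
      _ ≤ |z| *2 + z^2*(1/2) :=
          add_le_add (mul_le_mul_of_nonneg_left hd1b (abs_nonneg z))
            (mul_le_mul_of_nonneg_left hd2b (sq_nonneg z))
      _ = 2 * |z| + 1/2*z^2 := by ring
  rcases le_or_gt M (64*(1+u)^2) with hsmall | hbig
  · -- small m: crude bound |θ| ≤ max |a| |b|
    have hab : |a| ≤ M*(2+u/8) * |z| := by
      rw [hA]
      have e2 : |z^2*a2| = z^2 * |a2| := by rw [abs_mul, abs_of_nonneg (sq_nonneg z)]
      calc |z*a1 + z^2*a2| ≤ |z*a1| + |z^2*a2| := abs_add_le _ _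
        _ = |z| * |a1| + z^2 * |a2| := by rw [abs_mul, e2]
        _ ≤ |z| *(2*M) + z^2*(M/8) :=
            add_le_add (mul_le_mul_of_nonneg_left ha1b (abs_nonneg z))
              (mul_le_mul_of_nonneg_left ha2b (sq_nonneg z))
        _ ≤ |z| *(2*M) + (u * |z|)*(M/8) := by
            have := mul_le_mul_of_nonneg_right hz2u (by linarith : (0:ℝ) ≤ M/8)
            linarith
        _ = M*(2+u/8) * |z| := by ring
    have hbb : |b| ≤ M*(2+u/8) * |z| := by
      rw [hB]
      have e2 : |z^2*b2| = z^2 * |b2| := by rw [abs_mul, abs_of_nonneg (sq_nonneg z)]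
      calc |z*b1 + z^2*b2| ≤ |z*b1| + |z^2*b2| := abs_add_le _ _
        _ = |z| * |b1| + z^2 * |b2| := by rw [abs_mul, e2]
        _ ≤ |z| *(2*M) + z^2*(M/8) :=
            add_le_add (mul_le_mul_of_nonneg_left hb1b (abs_nonneg z))
              (mul_le_mul_of_nonneg_left hb2b (sq_nonneg z))
        _ ≤ |z| *(2*M) + (u * |z|)*(M/8) := by
            have := mul_le_mul_of_nonneg_right hz2u (by linarith : (0:ℝ) ≤ M/8)
            linarith
        _ = M*(2+u/8) * |z| := by ring
    have hup : θ ≤ max a b := by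
      rw [hθdef, Real.log_le_iff_le_exp hcomb]
      have e1 := mul_le_mul_of_nonneg_left
        (Real.exp_le_exp.mpr (le_max_left a b)) (by linarith : (0:ℝ) ≤ 1-p)
      have e2 := mul_le_mul_of_nonneg_left
        (Real.exp_le_exp.mpr (le_max_right a b)) hp0
      linarith
    have hlo : min a b ≤ θ := by
      rw [hθdef, Real.le_log_iff_exp_le hcomb]
      have e1 := mul_le_mul_of_nonneg_left
        (Real.exp_le_exp.mpr (min_le_left a b)) (by linarith : (0:ℝ) ≤ 1-p)
      have e2 := mul_le_mul_of_nonneg_left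
        (Real.exp_le_exp.mpr (min_le_right a b)) hp0
      linarith
    have hθm : |θ| ≤ M*(2+u/8) * |z| := by
      rw [abs_le]
      constructor
      · have h1 : -(M*(2+u/8) * |z|) ≤ min a b :=
          le_min (by linarith [neg_abs_le a]) (by linarith [neg_abs_le b])
        linarith
      · have h1 : max a b ≤ M*(2+u/8) * |z| :=
          max_le (by linarith [le_abs_self a]) (by linarith [le_abs_self b])
        linarith
    have h2 : M^2 ≤ 4096*(1+u)^4 := by
      calc M^2 = M*M := sq M
        _ ≤ (64*(1+u)^2)*(64*(1+u)^2) :=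
            mul_le_mul hsmall hsmall hM0.le (by positivity)
        _ = 4096*(1+u)^4 := by ring
    calc |θ| ≤ M*(2+u/8) * |z| := hθm
      _ ≤ C * |z|/M := by
          rw [le_div_iff₀ hM0]
          have h3 := mul_le_mul_of_nonneg_right h2
            (mul_nonneg (by positivity : (0:ℝ) ≤ 2+u/8) (abs_nonneg z))
          have h4 : (0:ℝ) ≤ ((2 + u + u^2/4 + u^3/32 + (2+u/2)^3*u^2) + 1) * |z| := by
            positivity
          rw [hC]
          linarith [h3, h4]
  · -- large m: Taylor expansion
    have hsqrtM : 8*(1+u) ≤ Real.sqrt M := by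
      have h1 := Real.sqrt_le_sqrt hbig.le
      rw [show 64*(1+u)^2 = (8*(1+u))^2 by ring, Real.sqrt_sq (by positivity)] at h1
      exact h1
    have hzM : |z| * Real.sqrt M ≤ u := by
      have h1 : Real.sqrt M ≤ Real.sqrt n := Real.sqrt_le_sqrt hMn
      have h2 := mul_le_mul_of_nonneg_left h1 (abs_nonneg z)
      linarith
    have hz8 : |z| * (8*(1+u)) ≤ u := by
      have h2 := mul_le_mul_of_nonneg_left hsqrtM (abs_nonneg z)
      linarith
    have hzsmall : |z| ≤ 1/8 := aux_zsmall hu hz8 (abs_nonneg z)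
    have hz2small : z^2 ≤ 1/64 := by
      rw [← sq_abs, sq]
      calc |z| * |z| ≤ (1/8)*(1/8) :=
            mul_le_mul hzsmall hzsmall (abs_nonneg z) (by norm_num)
        _ = 1/64 := by norm_num
    have hD1 : |D| ≤ 1 := by
      calc |D| ≤ 2 * |z| + 1/2*z^2 := hDb
        _ ≤ 1 := by linarith
    have hT := log_taylor_bound p D hp0 hp1.le hD1
    have hθ2 : |θ| ≤ |a + (p*D + p*(1-p)*D^2/2)| + |D|^3 := by
      rw [hθ, show a + Real.log (1 - p + p*Real.exp D)
          = (a + (p*D + p*(1-p)*D^2/2))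
            + (Real.log (1 - p + p*Real.exp D) - (p*D + p*(1-p)*D^2/2)) by ring]
      exact (abs_add_le _ _).trans (by linarith)
    have hz2dM : z^2 ≤ u^2/M := by
      rw [le_div_iff₀ hM0]; linarith
    have hz3 : |z|^3 ≤ u^2/M * |z| := by
      have e1 : |z|^3 = z^2 * |z| := by rw [← sq_abs]; ring
      rw [e1]
      exact mul_le_mul_of_nonneg_right hz2dM (abs_nonneg z)
    have hz4 : z^4 ≤ u^2/M*(u * |z|) := by
      have e1 : z^4 = z^2*z^2 := by ring
      rw [e1]
      exact mul_le_mul hz2dM hz2u (sq_nonneg z) (by positivity)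
    have hSb : |a + (p*D + p*(1-p)*D^2/2)| ≤ (2 + u + u^2/4 + u^3/32) * |z|/M := by
      rw [hS]
      have e1 : |z*(a1 + p*(b1-a1))| = |z| * |a1 + p*(b1-a1)| := abs_mul _ _
      have e2 : |z^2*(a2 + p*(b2-a2) + p*(1-p)*(b1-a1)^2/2)|
          = z^2 * |a2 + p*(b2-a2) + p*(1-p)*(b1-a1)^2/2| := by
        rw [abs_mul, abs_of_nonneg (sq_nonneg z)]
      have e3 : |z^3*(p*(1-p)*(b1-a1)*(b2-a2))| = |z|^3 * |p*(1-p)*(b1-a1)*(b2-a2)| := by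
        rw [abs_mul, abs_pow]
      have e4 : |z^4*(p*(1-p)*(b2-a2)^2/2)| = z^4 * |p*(1-p)*(b2-a2)^2/2| := by
        rw [abs_mul, abs_of_nonneg (by positivity : (0:ℝ) ≤ z^4)]
      calc |z*(a1 + p*(b1-a1)) + z^2*(a2 + p*(b2-a2) + p*(1-p)*(b1-a1)^2/2)
            + z^3*(p*(1-p)*(b1-a1)*(b2-a2)) + z^4*(p*(1-p)*(b2-a2)^2/2)|
          ≤ |z*(a1 + p*(b1-a1)) + z^2*(a2 + p*(b2-a2) + p*(1-p)*(b1-a1)^2/2)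
            + z^3*(p*(1-p)*(b1-a1)*(b2-a2))| + |z^4*(p*(1-p)*(b2-a2)^2/2)| := abs_add_le _ _
        _ ≤ |z*(a1 + p*(b1-a1)) + z^2*(a2 + p*(b2-a2) + p*(1-p)*(b1-a1)^2/2)|
            + |z^3*(p*(1-p)*(b1-a1)*(b2-a2))| + |z^4*(p*(1-p)*(b2-a2)^2/2)| := by
            linarith [abs_add_le (z*(a1 + p*(b1-a1))
              + z^2*(a2 + p*(b2-a2) + p*(1-p)*(b1-a1)^2/2))
              (z^3*(p*(1-p)*(b1-a1)*(b2-a2)))]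
        _ ≤ |z*(a1 + p*(b1-a1))| + |z^2*(a2 + p*(b2-a2) + p*(1-p)*(b1-a1)^2/2)|
            + |z^3*(p*(1-p)*(b1-a1)*(b2-a2))| + |z^4*(p*(1-p)*(b2-a2)^2/2)| := by
            linarith [abs_add_le (z*(a1 + p*(b1-a1)))
              (z^2*(a2 + p*(b2-a2) + p*(1-p)*(b1-a1)^2/2))]
        _ ≤ |z| *(2/M) + z^2*(1/M) + |z|^3*(1/4) + z^4*(1/32) := by
            rw [e1, e2, e3, e4]
            have t1 := mul_le_mul_of_nonneg_left hc1b (abs_nonneg z)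
            have t2 := mul_le_mul_of_nonneg_left hc2b (sq_nonneg z)
            have t3 := mul_le_mul_of_nonneg_left hc3b (by positivity : (0:ℝ) ≤ |z|^3)
            have t4 := mul_le_mul_of_nonneg_left hc4b (by positivity : (0:ℝ) ≤ z^4)
            linarith
        _ ≤ |z| *(2/M) + (u * |z|)*(1/M) + (u^2/M * |z|)*(1/4) + (u^2/M*(u * |z|))*(1/32) := by
            have t2 := mul_le_mul_of_nonneg_right hz2u
              (by positivity : (0:ℝ) ≤ 1/M)
            have t3 := mul_le_mul_of_nonneg_right hz3 (by norm_num : (0:ℝ) ≤ 1/4)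
            have t4 := mul_le_mul_of_nonneg_right hz4 (by norm_num : (0:ℝ) ≤ 1/32)
            linarith
        _ = (2 + u + u^2/4 + u^3/32) * |z|/M := by field_simp
    have hD3 : |D|^3 ≤ (2+u/2)^3*u^2 * |z|/M := by
      have h1 : |D| ≤ (2+u/2) * |z| := by
        calc |D| ≤ 2 * |z| + 1/2*z^2 := hDb
          _ ≤ 2 * |z| + 1/2*(u * |z|) := by
              have := mul_le_mul_of_nonneg_left hz2u (by norm_num : (0:ℝ) ≤ 1/2)
              linarith
          _ = (2+u/2) * |z| := by ring
      have h2 : |D|^3 ≤ ((2+u/2) * |z|)^3 := pow_le_pow_left₀ (abs_nonneg D) h1 3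
      calc |D|^3 ≤ ((2+u/2) * |z|)^3 := h2
        _ = (2+u/2)^3 * |z|^3 := by ring
        _ ≤ (2+u/2)^3*(u^2/M * |z|) := mul_le_mul_of_nonneg_left hz3 (by positivity)
        _ = (2+u/2)^3*u^2 * |z|/M := by ring
    have hCge : (2 + u + u^2/4 + u^3/32) + (2+u/2)^3*u^2 ≤ C := by
      rw [hC]
      have h4 : (0:ℝ) ≤ 4096*(1+u)^4*(2+u/8) := by positivity
      linarith
    calc |θ| ≤ (2 + u + u^2/4 + u^3/32) * |z|/M + (2+u/2)^3*u^2 * |z|/M := by linarith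
      _ = ((2 + u + u^2/4 + u^3/32) + (2+u/2)^3*u^2) * |z|/M := by ring
      _ ≤ C * |z|/M := by gcongr
end

section
/- Let r ≥ 1 and 0 ≤ s ≤ r be integers, let b₁, …, b_r be points of [0,∞), and let J be a subset of {1,…,r} of cardinality s chosen uniformly at random among all such subsets. Let φ : [0,∞) → ℝ be a bounded measurable function with ‖φ‖_∞ = sup_x |φ(x)| > 0. Then for every ε > 0, P( | (1/r) Σ_{j ∈ J} φ(b_j) − (s/r) · (1/r) Σ_{j=1}^r φ(b_j) | > ε ) ≤ 2 exp( − r ε² / (64 ‖φ‖_∞²) ). -/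
/-!
Let `R(J) = complMean x J` be the mean of the values `x` outside `J`, where `|x| ≤ C` on `n`
points. A uniform `(k+1)`-subset is a uniform `k`-subset `J` plus a uniform new point `i ∉ J`,
and adding `i` moves `R` by `(R(J) - x i) / (#Jᶜ - 1)`: a step of mean zero and size at most
`2C / (#Jᶜ - 1)`. So `R` is a martingale along the thinning, and Hoeffding's lemma for each
step makes `R(J) - R(∅)` sub-Gaussian with variance proxy `8C² / (n - s)` for a uniform
`s`-subset `J`, because `∑_{m ≥ n - s} 1/m² ≤ 2/(n - s)`. The thinning deviation equals
`(n - s)/n · (R(∅) - R(J))`, so a Chernoff bound finishes the proof.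
-/

section

open Finset Real
open scoped BigOperators

theorem Real.exp_mul_le_cosh_add_div_mul_sinh {c y : ℝ} (hc : 0 < c) (hy : |y| ≤ c) (t : ℝ) :
    exp (t * y) ≤ cosh (t * c) + y / c * sinh (t * c) := by
  have hy' := abs_le.1 hy
  have hconv := convexOn_exp.2 (Set.mem_univ (-(t * c))) (Set.mem_univ (t * c))
    (div_nonneg (by linarith : 0 ≤ c - y) (by linarith : (0:ℝ) ≤ 2 * c))
    (div_nonneg (by linarith : 0 ≤ c + y) (by linarith : (0:ℝ) ≤ 2 * c))
    (by field_simp; ring)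
  have harg : (c - y) / (2 * c) * -(t * c) + (c + y) / (2 * c) * (t * c) = t * y := by
    field_simp; ring
  have hval : (c - y) / (2 * c) * exp (-(t * c)) + (c + y) / (2 * c) * exp (t * c)
      = cosh (t * c) + y / c * sinh (t * c) := by
    rw [cosh_eq, sinh_eq]; field_simp; ring
  simpa only [smul_eq_mul, harg, hval] using hconv

namespace Finset

theorem expect_exp_mul_le_of_expect_eq_zero {ι : Type*} {s : Finset ι} {y : ι → ℝ} {c : ℝ}
    (hc : 0 < c) (hy : ∀ i ∈ s, |y i| ≤ c) (hmean : 𝔼 i ∈ s, y i = 0) (t : ℝ) :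
    𝔼 i ∈ s, exp (t * y i) ≤ exp (t ^ 2 * c ^ 2 / 2) := by
  rcases s.eq_empty_or_nonempty with rfl | hs
  · simp only [expect_empty]; positivity
  calc 𝔼 i ∈ s, exp (t * y i)
      ≤ 𝔼 i ∈ s, (cosh (t * c) + y i / c * sinh (t * c)) :=
        expect_le_expect fun i hi => exp_mul_le_cosh_add_div_mul_sinh hc (hy i hi) t
    _ = cosh (t * c) := by
        rw [expect_add_distrib, expect_const hs, ← expect_mul, ← expect_div, hmean]; ring
    _ ≤ exp (t ^ 2 * c ^ 2 / 2) := by rw [← mul_pow]; exact cosh_le_exp_half_sq _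

variable {α : Type*} [DecidableEq α]

theorem sum_powersetCard_sum_sdiff_insert {M : Type*} [AddCommMonoid M] (s : Finset α) (k : ℕ)
    (f : Finset α → M) :
    ∑ J ∈ powersetCard k s, ∑ i ∈ s \ J, f (insert i J)
      = (k + 1) • ∑ J ∈ powersetCard (k + 1) s, f J := by
  calc ∑ J ∈ powersetCard k s, ∑ i ∈ s \ J, f (insert i J)
      = ∑ J ∈ powersetCard (k + 1) s, ∑ _i ∈ J, f J := by
        rw [sum_sigma', sum_sigma']
        refine sum_nbij' (fun p => ⟨insert p.2 p.1, p.2⟩) (fun p => ⟨p.1.erase p.2, p.2⟩)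
          ?_ ?_ ?_ ?_ fun _ _ => rfl
        · rintro ⟨J, i⟩ h
          simp only [mem_sigma, mem_powersetCard, mem_sdiff] at h ⊢
          exact ⟨⟨insert_subset h.2.1 h.1.1, by rw [card_insert_of_notMem h.2.2, h.1.2]⟩,
            mem_insert_self i J⟩
        · rintro ⟨J, i⟩ h
          simp only [mem_sigma, mem_powersetCard, mem_sdiff] at h ⊢
          exact ⟨⟨(erase_subset i J).trans h.1.1, by rw [card_erase_of_mem h.2, h.1.2]; rfl⟩,
            h.1.1 h.2, notMem_erase i J⟩
        · rintro ⟨J, i⟩ h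
          simp only [mem_sigma, mem_sdiff] at h
          simp [erase_insert h.2.2]
        · rintro ⟨J, i⟩ h
          simp only [mem_sigma] at h
          simp [insert_erase h.2]
    _ = (k + 1) • ∑ J ∈ powersetCard (k + 1) s, f J := by
        rw [smul_sum]
        exact sum_congr rfl fun J hJ => by rw [sum_const, (mem_powersetCard.1 hJ).2]

theorem expect_powersetCard_succ {K : Type*} [Semifield K] [CharZero K] (s : Finset α) (k : ℕ)
    (f : Finset α → K) :
    𝔼 J ∈ powersetCard (k + 1) s, f J
      = 𝔼 J ∈ powersetCard k s, 𝔼 i ∈ s \ J, f (insert i J) := by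
  have hcard : ∀ J ∈ powersetCard k s, #(s \ J) = #s - k := fun J hJ => by
    rw [mem_powersetCard] at hJ
    rw [card_sdiff_of_subset hJ.1, hJ.2]
  have hk1 : ((k + 1 : ℕ) : K) ≠ 0 := Nat.cast_ne_zero.2 k.succ_ne_zero
  calc 𝔼 J ∈ powersetCard (k + 1) s, f J
      = (k + 1 : ℕ) • (∑ J ∈ powersetCard (k + 1) s, f J)
          / ((#s).choose (k + 1) * (k + 1) : ℕ) := by
        rw [expect_eq_sum_div_card, card_powersetCard, nsmul_eq_mul, Nat.cast_mul,
          mul_comm (((#s).choose (k + 1) : ℕ) : K), mul_div_mul_left _ _ hk1]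
    _ = (∑ J ∈ powersetCard k s, ∑ i ∈ s \ J, f (insert i J))
          / ((#s).choose k * (#s - k) : ℕ) := by
        rw [sum_powersetCard_sum_sdiff_insert, Nat.choose_succ_right_eq]
    _ = 𝔼 J ∈ powersetCard k s, 𝔼 i ∈ s \ J, f (insert i J) := by
        rw [expect_eq_sum_div_card, card_powersetCard, Nat.cast_mul, mul_comm, ← div_div, sum_div]
        refine congrArg (· / ((#s).choose k : K)) (sum_congr rfl fun J hJ => ?_)
        rw [expect_eq_sum_div_card, hcard J hJ]

end Finset

def IsSubgaussianOn {α : Type*} (s : Finset α) (Z : α → ℝ) (v : ℝ) : Prop :=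
  ∀ t : ℝ, 𝔼 x ∈ s, exp (t * Z x) ≤ exp (t ^ 2 * v / 2)

namespace IsSubgaussianOn

variable {α : Type*} {s : Finset α} {Z : α → ℝ} {v : ℝ}

theorem neg (h : IsSubgaussianOn s Z v) : IsSubgaussianOn s (fun x => -Z x) v := fun t => by
  simpa only [mul_neg, neg_mul, neg_sq] using h (-t)

theorem card_filter_lt_div_le (h : IsSubgaussianOn s Z v) (hv : 0 < v) {a : ℝ} (ha : 0 ≤ a) :
    (#(s.filter fun x => a < Z x) : ℝ) / #s ≤ exp (-a ^ 2 / (2 * v)) := by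
  set t := a / v with ht_def
  have ht : 0 ≤ t := div_nonneg ha hv.le
  calc (#(s.filter fun x => a < Z x) : ℝ) / #s
      ≤ 𝔼 x ∈ s, exp (t * (Z x - a)) := by
        rw [card_filter, expect_eq_sum_div_card]
        push_cast
        gcongr with x
        split_ifs with hx
        · exact one_le_exp (mul_nonneg ht (by linarith))
        · positivity
    _ = exp (-(t * a)) * 𝔼 x ∈ s, exp (t * Z x) := by
        rw [mul_expect]
        exact expect_congr rfl fun x _ => by rw [← exp_add]; congr 1; ring
    _ ≤ exp (-(t * a)) * exp (t ^ 2 * v / 2) := by gcongr; exact h t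
    _ = exp (-a ^ 2 / (2 * v)) := by
        rw [← exp_add, ht_def]; congr 1; field_simp; ring

theorem card_filter_lt_abs_div_le (h : IsSubgaussianOn s Z v) (hv : 0 < v) {a : ℝ}
    (ha : 0 ≤ a) :
    (#(s.filter fun x => a < |Z x|) : ℝ) / #s ≤ 2 * exp (-a ^ 2 / (2 * v)) := by
  classical
  have hsub : s.filter (fun x => a < |Z x|)
      ⊆ s.filter (fun x => a < Z x) ∪ s.filter (fun x => a < -Z x) := by
    intro x hx
    simp only [mem_filter, mem_union, lt_abs] at hx ⊢
    tauto
  calc (#(s.filter fun x => a < |Z x|) : ℝ) / #s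
      ≤ (#(s.filter fun x => a < Z x) : ℝ) / #s
          + (#(s.filter fun x => a < -Z x) : ℝ) / #s := by
        rw [← add_div]
        gcongr
        exact_mod_cast (card_le_card hsub).trans (card_union_le _ _)
    _ ≤ 2 * exp (-a ^ 2 / (2 * v)) := by
        linarith [h.card_filter_lt_div_le hv ha, h.neg.card_filter_lt_div_le hv ha]

end IsSubgaussianOn

variable {ι : Type*} [Fintype ι] [DecidableEq ι]

noncomputable def complMean (x : ι → ℝ) (J : Finset ι) : ℝ := 𝔼 i ∈ Jᶜ, x i

theorem complMean_insert (x : ι → ℝ) {J : Finset ι} {i : ι} (hi : i ∉ J) (hJ : 1 < #Jᶜ) :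
    complMean x (insert i J) = complMean x J + (complMean x J - x i) / (#Jᶜ - 1 : ℝ) := by
  have hiJ : i ∈ Jᶜ := mem_compl.2 hi
  have hm : (1 : ℝ) < #Jᶜ := by exact_mod_cast hJ
  have hm1 : (#Jᶜ - 1 : ℝ) ≠ 0 := by linarith
  have hm0 : (#Jᶜ : ℝ) ≠ 0 := by linarith
  unfold complMean
  rw [compl_insert, expect_eq_sum_div_card, expect_eq_sum_div_card, sum_erase_eq_sub hiJ,
    card_erase_of_mem hiJ, Nat.cast_sub hJ.le, Nat.cast_one]
  field_simp
  ring

theorem complMean_empty (x : ι → ℝ) : complMean x ∅ = (∑ i, x i) / Fintype.card ι := by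
  rw [complMean, compl_empty, expect_eq_sum_div_card, card_univ]

theorem sum_eq_sum_sub_card_compl_mul_complMean (x : ι → ℝ) (J : Finset ι) :
    ∑ j ∈ J, x j = ∑ j, x j - #Jᶜ * complMean x J := by
  rw [complMean, ← nsmul_eq_mul, card_smul_expect, ← sum_add_sum_compl J x,
    add_sub_cancel_right]

theorem abs_complMean_le {x : ι → ℝ} {C : ℝ} (hC : 0 ≤ C) (hx : ∀ i, |x i| ≤ C)
    (J : Finset ι) :
    |complMean x J| ≤ C := by
  rcases (Jᶜ).eq_empty_or_nonempty with hJ | hJ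
  · rwa [complMean, hJ, expect_empty, abs_zero]
  · exact (abs_expect_le _ _).trans (expect_le hJ fun i _ => hx i)

theorem expect_exp_complMean_insert_le {x : ι → ℝ} {C : ℝ} (hC : 0 < C) (hx : ∀ i, |x i| ≤ C)
    {J : Finset ι} (hJ : 1 < #Jᶜ) (a t : ℝ) :
    𝔼 i ∈ univ \ J, exp (t * (complMean x (insert i J) - a))
      ≤ exp (t * (complMean x J - a)) * exp (t ^ 2 * (2 * C / (#Jᶜ - 1)) ^ 2 / 2) := by
  have hm : (0 : ℝ) < #Jᶜ - 1 := by
    have : (1 : ℝ) < #Jᶜ := by exact_mod_cast hJ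
    linarith
  let y := fun i => (complMean x J - x i) / (#Jᶜ - 1 : ℝ)
  have hy : ∀ i ∈ Jᶜ, |y i| ≤ 2 * C / (#Jᶜ - 1) := fun i _ => by
    rw [abs_div, abs_of_pos hm]
    gcongr
    linarith [abs_sub (complMean x J) (x i), abs_complMean_le hC.le hx J, hx i]
  have hmean : 𝔼 i ∈ Jᶜ, y i = 0 := by
    rw [← expect_div, expect_sub_distrib, expect_const (card_pos.1 (by omega)), complMean,
      sub_self, zero_div]
  rw [← compl_eq_univ_sdiff]
  calc 𝔼 i ∈ Jᶜ, exp (t * (complMean x (insert i J) - a))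
      = exp (t * (complMean x J - a)) * 𝔼 i ∈ Jᶜ, exp (t * y i) := by
        rw [mul_expect]
        refine expect_congr rfl fun i hi => ?_
        rw [complMean_insert x (mem_compl.1 hi) hJ, ← exp_add]
        congr 1
        simp only [y]
        ring
    _ ≤ exp (t * (complMean x J - a)) * exp (t ^ 2 * (2 * C / (#Jᶜ - 1)) ^ 2 / 2) := by
        gcongr
        exact expect_exp_mul_le_of_expect_eq_zero (by positivity) hy hmean t

theorem div_add_one_add_sq_div_le (C : ℝ) {m : ℝ} (hm : 1 ≤ m) :
    8 * C ^ 2 / (m + 1) + (2 * C / m) ^ 2 ≤ 8 * C ^ 2 / m := by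
  have hm0 : 0 < m := by linarith
  rw [div_pow, div_add_div _ _ (by linarith) (by positivity), div_le_div_iff₀ (by positivity) hm0]
  nlinarith [mul_nonneg (mul_nonneg (sq_nonneg C) hm0.le) (by linarith : 0 ≤ m - 1)]

theorem isSubgaussianOn_complMean_sub {x : ι → ℝ} {C : ℝ} (hC : 0 < C) (hx : ∀ i, |x i| ≤ C)
    {k : ℕ} (hk : k < Fintype.card ι) :
    IsSubgaussianOn (powersetCard k univ) (fun J => complMean x J - complMean x ∅)
      (8 * C ^ 2 / (Fintype.card ι - k)) := by
  induction k with
  | zero =>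
    intro t
    simp only [powersetCard_zero, expect_singleton, sub_self, mul_zero, exp_zero, Nat.cast_zero,
      sub_zero]
    exact one_le_exp (by positivity)
  | succ k ih =>
    intro t
    set n := Fintype.card ι
    have hm : (1 : ℝ) ≤ n - k - 1 := by
      have : (k : ℝ) + 2 ≤ n := by exact_mod_cast hk
      linarith
    have hvar : 8 * C ^ 2 / (n - k) + (2 * C / (n - k - 1)) ^ 2 ≤ 8 * C ^ 2 / (n - k - 1) := by
      simpa only [sub_add_cancel] using div_add_one_add_sq_div_le C hm
    have hcard : ∀ J ∈ powersetCard k (univ : Finset ι), (#Jᶜ : ℝ) - 1 = n - k - 1 := fun J hJ => by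
      rw [card_compl, (mem_powersetCard_univ.1 hJ), Nat.cast_sub (by omega)]
    rw [expect_powersetCard_succ]
    calc 𝔼 J ∈ powersetCard k univ, 𝔼 i ∈ univ \ J,
          exp (t * (complMean x (insert i J) - complMean x ∅))
        ≤ 𝔼 J ∈ powersetCard k univ, exp (t * (complMean x J - complMean x ∅))
            * exp (t ^ 2 * (2 * C / (n - k - 1)) ^ 2 / 2) := by
          refine expect_le_expect fun J hJ => ?_
          rw [← hcard J hJ]
          refine expect_exp_complMean_insert_le hC hx ?_ _ t
          rw [card_compl, mem_powersetCard_univ.1 hJ]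
          omega
      _ ≤ exp (t ^ 2 * (8 * C ^ 2 / (n - k)) / 2)
            * exp (t ^ 2 * (2 * C / (n - k - 1)) ^ 2 / 2) := by
          rw [← expect_mul]
          gcongr
          exact ih (by omega) t
      _ ≤ exp (t ^ 2 * (8 * C ^ 2 / (n - (k + 1 : ℕ))) / 2) := by
          rw [← exp_add, ← add_div, ← mul_add, Nat.cast_succ, ← sub_sub]
          gcongr

theorem inv_card_mul_sum_sub_eq_mul_complMean_sub (x : ι → ℝ) (J : Finset ι) :
    1 / (Fintype.card ι : ℝ) * ∑ j ∈ J, x j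
        - #J / (Fintype.card ι : ℝ) * (1 / (Fintype.card ι : ℝ) * ∑ j, x j)
      = (Fintype.card ι - #J) / (Fintype.card ι : ℝ) * (complMean x ∅ - complMean x J) := by
  rw [sum_eq_sum_sub_card_compl_mul_complMean x J, complMean_empty, card_compl,
    Nat.cast_sub (card_le_univ J)]
  rcases eq_or_ne (Fintype.card ι : ℝ) 0 with h | h
  · simp [h]
  · field_simp
    ring

theorem card_filter_lt_abs_thinning_deviation_div_le {x : ι → ℝ} {C : ℝ} (hC : 0 < C)
    (hx : ∀ i, |x i| ≤ C) (s : ℕ) {ε : ℝ} (hε : 0 < ε) :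
    (#((powersetCard s univ).filter fun J => ε < |1 / (Fintype.card ι : ℝ) * ∑ j ∈ J, x j
        - (s : ℝ) / Fintype.card ι * (1 / (Fintype.card ι : ℝ) * ∑ j, x j)|) : ℝ)
        / #(powersetCard s (univ : Finset ι))
      ≤ 2 * exp (-((Fintype.card ι : ℝ) * ε ^ 2) / (64 * C ^ 2)) := by
  set n := Fintype.card ι
  have hdev : ∀ J ∈ powersetCard s (univ : Finset ι),
      1 / (n : ℝ) * ∑ j ∈ J, x j - (s : ℝ) / n * (1 / (n : ℝ) * ∑ j, x j)
        = (n - s) / n * (complMean x ∅ - complMean x J) := fun J hJ => by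
    rw [← mem_powersetCard_univ.1 hJ, inv_card_mul_sum_sub_eq_mul_complMean_sub]
  rcases lt_or_ge s n with hsn | hns
  · have hns : (0 : ℝ) < n - s := sub_pos.2 (by exact_mod_cast hsn)
    have hn : (0 : ℝ) < n := by linarith [(Nat.cast_nonneg s : (0 : ℝ) ≤ s)]
    set a := n * ε / (n - s) with ha
    have hevent : ∀ J ∈ powersetCard s (univ : Finset ι),
        ε < |1 / (n : ℝ) * ∑ j ∈ J, x j - (s : ℝ) / n * (1 / (n : ℝ) * ∑ j, x j)|
          ↔ a < |complMean x J - complMean x ∅| := fun J hJ => by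
      rw [hdev J hJ, abs_mul, abs_of_pos (div_pos hns hn), abs_sub_comm, div_mul_eq_mul_div,
        lt_div_iff₀ hn, div_lt_iff₀ hns]
      constructor <;> intro h <;> linarith
    have hexp : -a ^ 2 / (2 * (8 * C ^ 2 / (n - s))) ≤ -((n : ℝ) * ε ^ 2) / (64 * C ^ 2) := by
      rw [neg_div, neg_div, neg_le_neg_iff]
      calc (n : ℝ) * ε ^ 2 / (64 * C ^ 2) ≤ n * ε ^ 2 / (16 * C ^ 2) := by gcongr; norm_num
        _ ≤ n * ε ^ 2 / (16 * C ^ 2) * (n / (n - s)) :=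
            le_mul_of_one_le_right (by positivity) ((one_le_div hns).2 (by linarith))
        _ = a ^ 2 / (2 * (8 * C ^ 2 / (n - s))) := by rw [ha]; field_simp; ring
    rw [filter_congr hevent]
    calc _ ≤ 2 * exp (-a ^ 2 / (2 * (8 * C ^ 2 / (n - s)))) :=
          (isSubgaussianOn_complMean_sub hC hx hsn).card_filter_lt_abs_div_le
            (div_pos (by positivity) hns) (by positivity)
      _ ≤ 2 * exp (-((n : ℝ) * ε ^ 2) / (64 * C ^ 2)) := by gcongr
  · rw [filter_false_of_mem fun J hJ => ?_, card_empty, Nat.cast_zero, zero_div]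
    · positivity
    · have hJs : s = n := le_antisymm (mem_powersetCard_univ.1 hJ ▸ card_le_univ J) hns
      rw [hdev J hJ, hJs, sub_self, zero_div, zero_mul, abs_zero, not_lt]
      exact hε.le

end

open MeasureTheory Set

open scoped Classical in
theorem thinning_concentration_single_function_general
    (r s : ℕ)
    (b : Fin r → ℝ) (hb : ∀ i, 0 ≤ b i)
    (φ : ℝ → ℝ)
    (hφbdd : BddAbove (Set.range fun x : Ici (0:ℝ) => |φ (x : ℝ)|))
    (Cφ : ℝ) (hCφ : Cφ = sSup (Set.range fun x : Ici (0:ℝ) => |φ (x : ℝ)|))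
    (hCφpos : 0 < Cφ)
    (ε : ℝ) (hε : 0 < ε) :
    (((Finset.univ.filter fun J : Finset (Fin r) => J.card = s).filter
        (fun J => ε < |((1 / (r : ℝ)) * (∑ j ∈ J, φ (b j))
          - ((s : ℝ) / r) * ((1 / (r : ℝ)) * ∑ j : Fin r, φ (b j)))|)).card : ℝ)
      / ((Finset.univ.filter fun J : Finset (Fin r) => J.card = s).card : ℝ)
      ≤ 2 * Real.exp (-((r : ℝ) * ε ^ 2) / (64 * Cφ ^ 2)) := by
  have hx : ∀ j, |φ (b j)| ≤ Cφ := fun j => hCφ ▸ le_csSup hφbdd ⟨⟨b j, hb j⟩, rfl⟩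
  have hsized : (Finset.univ.filter fun J : Finset (Fin r) => J.card = s)
      = Finset.powersetCard s Finset.univ := by
    rw [Finset.powersetCard_eq_filter, Finset.powerset_univ]
  simpa only [hsized, Fintype.card_fin] using
    card_filter_lt_abs_thinning_deviation_div_le hCφpos hx s hε

open scoped Classical in
/-- concentration for uniform thinning, tested against one function.
Let `b₁, …, b_r` be points of `[0,∞)` and let `J ⊆ {1,…,r}` with `|J| = s` be chosen
uniformly.  For bounded measurable `φ` with `‖φ‖_∞ = sup_{x ≥ 0} |φ(x)| > 0` and `ε > 0`,
the probability (counting fraction of subsets `J`) that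
`|(1/r) Σ_{j∈J} φ(b_j) − (s/r)(1/r) Σ_{j=1}^r φ(b_j)| > ε`
is at most `2 exp(−r ε² / (64 ‖φ‖_∞²))`. -/
theorem thinning_concentration_single_function
    (r s : ℕ) (hr : 1 ≤ r) (hs : s ≤ r)
    (b : Fin r → ℝ) (hb : ∀ i, 0 ≤ b i)
    (φ : ℝ → ℝ) (hφmeas : Measurable φ)
    (hφbdd : BddAbove (Set.range fun x : Ici (0:ℝ) => |φ (x : ℝ)|))
    (Cφ : ℝ) (hCφ : Cφ = sSup (Set.range fun x : Ici (0:ℝ) => |φ (x : ℝ)|))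
    (hCφpos : 0 < Cφ)
    (ε : ℝ) (hε : 0 < ε) :
    (((Finset.univ.filter fun J : Finset (Fin r) => J.card = s).filter
        (fun J => ε < |((1 / (r : ℝ)) * (∑ j ∈ J, φ (b j))
          - ((s : ℝ) / r) * ((1 / (r : ℝ)) * ∑ j : Fin r, φ (b j)))|)).card : ℝ)
      / ((Finset.univ.filter fun J : Finset (Fin r) => J.card = s).card : ℝ)
      ≤ 2 * Real.exp (-((r : ℝ) * ε ^ 2) / (64 * Cφ ^ 2)) :=
  thinning_concentration_single_function_general r s b hb φ hφbdd Cφ hCφ hCφpos ε hε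
end

section
/- Let r ≥ 1 be an integer, let S_r be the symmetric group on {1,…,r} equipped with the normalized Hamming distance d_H, and let ℚ_r be the uniform probability measure on S_r. Let M > 0 and let f : S_r → ℝ be M-Lipschitz with respect to d_H. Then for every ε ≥ 0, ℚ_r( { π : |f(π) − E_{ℚ_r}[f]| > ε } ) ≤ 2 exp( − r ε² / (16 M²) ). -/
open MeasureTheory Set

section MaureyAux

open Finset Equiv Equiv.Perm
open scoped Classical


lemma maurey_hoeffding {ι : Type*} [Fintype ι] (h : ι → ℝ) (b L : ℝ) (hb : 0 < b)
    (hsum : ∑ i, h i = 0) (hbd : ∀ i, |h i| ≤ b) :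
    ∑ i, Real.exp (L * h i) ≤ (Fintype.card ι : ℝ) * Real.exp (L ^ 2 * b ^ 2 / 2) := by
  have key : ∀ i, Real.exp (L * h i) ≤
      ((h i + b) / (2 * b)) * Real.exp (L * b) + ((b - h i) / (2 * b)) * Real.exp (-(L * b)) := by
    intro i
    have h1 : -b ≤ h i := (abs_le.1 (hbd i)).1
    have h2 : h i ≤ b := (abs_le.1 (hbd i)).2
    have ht1 : (0:ℝ) ≤ (h i + b) / (2 * b) := div_nonneg (by linarith) (by linarith)
    have ht2 : (0:ℝ) ≤ (b - h i) / (2 * b) := by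
      apply div_nonneg (by linarith) (by linarith)
    have hts : (h i + b) / (2 * b) + (b - h i) / (2 * b) = 1 := by
      field_simp; ring
    have := convexOn_exp.2 (Set.mem_univ (L * b)) (Set.mem_univ (-(L * b))) ht1 ht2 hts
    simp only [smul_eq_mul] at this
    have harg : (h i + b) / (2 * b) * (L * b) + (b - h i) / (2 * b) * -(L * b) = L * h i := by
      field_simp; ring
    rwa [harg] at this
  calc ∑ i, Real.exp (L * h i)
      ≤ ∑ i, (((h i + b) / (2 * b)) * Real.exp (L * b) + ((b - h i) / (2 * b)) * Real.exp (-(L * b))) :=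
        Finset.sum_le_sum fun i _ => key i
    _ = (Fintype.card ι : ℝ) * Real.cosh (L * b) := by
        rw [Finset.sum_add_distrib, ← Finset.sum_mul, ← Finset.sum_mul]
        have e1 : ∑ i, (h i + b) / (2 * b) = (Fintype.card ι : ℝ) / 2 := by
          rw [← Finset.sum_div, Finset.sum_add_distrib, hsum]
          simp [Finset.card_univ]
          field_simp
        have e2 : ∑ i, (b - h i) / (2 * b) = (Fintype.card ι : ℝ) / 2 := by
          rw [← Finset.sum_div, Finset.sum_sub_distrib, hsum]
          simp [Finset.card_univ]
          field_simp
        rw [e1, e2, Real.cosh_eq]; ring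
    _ ≤ (Fintype.card ι : ℝ) * Real.exp (L ^ 2 * b ^ 2 / 2) := by
        apply mul_le_mul_of_nonneg_left _ (Nat.cast_nonneg _)
        have := Real.cosh_le_exp_half_sq (L * b)
        calc Real.cosh (L * b) ≤ Real.exp ((L * b) ^ 2 / 2) := this
          _ = Real.exp (L ^ 2 * b ^ 2 / 2) := by ring_nf



-- Hamming distance within a coset
lemma maurey_coset_card {n : ℕ} (p : Fin (n+1)) (e e' : Equiv.Perm (Fin n)) :
    (Finset.univ.filter fun i : Fin (n+1) =>
        decomposeFin.symm (p, e) i ≠ decomposeFin.symm (p, e') i).card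
      = (Finset.univ.filter fun j : Fin n => e j ≠ e' j).card := by
  rw [Finset.card_filter, Finset.card_filter, Fin.sum_univ_succ]
  simp only [decomposeFin_symm_apply_zero, decomposeFin_symm_apply_succ]
  rw [if_neg (by simp)]
  rw [zero_add]
  apply Finset.sum_congr rfl
  intro j _
  congr 1
  simp only [ne_eq, EmbeddingLike.apply_eq_iff_eq, Fin.succ_inj, eq_iff_iff]

-- swap multiplication changes at most 2 coordinates
lemma maurey_swap_card {n : ℕ} (p q : Fin n) (σ : Equiv.Perm (Fin n)) :
    ((Finset.univ.filter fun i : Fin n => σ i ≠ (swap p q * σ) i).card : ℝ) ≤ 2 := by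
  have hsub : (Finset.univ.filter fun i : Fin n => σ i ≠ (swap p q * σ) i)
      ⊆ {σ.symm p, σ.symm q} := by
    intro i hi
    rw [Finset.mem_filter] at hi
    have := hi.2
    have hmem : σ i = p ∨ σ i = q := by
      by_contra hc
      push_neg at hc
      exact this (swap_apply_of_ne_of_ne hc.1 hc.2).symm
    rcases hmem with h | h
    · simp [← h, Finset.mem_insert]
    · simp [← h]
  calc ((Finset.univ.filter fun i : Fin n => σ i ≠ (swap p q * σ) i).card : ℝ)
      ≤ (({σ.symm p, σ.symm q} : Finset (Fin n)).card : ℝ) := by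
        exact_mod_cast Finset.card_le_card hsub
    _ ≤ 2 := by
        have := Finset.card_insert_le (σ.symm p) ({σ.symm q} : Finset (Fin n))
        simp only [Finset.card_singleton] at this
        exact_mod_cast this


lemma maurey_fst {n : ℕ} (σ : Equiv.Perm (Fin (n+1))) : (decomposeFin σ).1 = σ 0 := by
  conv_rhs => rw [← decomposeFin.symm_apply_apply σ]
  rw [show decomposeFin.symm (decomposeFin σ) = decomposeFin.symm ((decomposeFin σ).1, (decomposeFin σ).2) from rfl]
  rw [decomposeFin_symm_apply_zero]

lemma maurey_reindex {n : ℕ} (p q : Fin (n+1)) (h : Equiv.Perm (Fin (n+1)) → ℝ) :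
    ∑ e : Equiv.Perm (Fin n), h (swap p q * decomposeFin.symm (p, e))
      = ∑ e : Equiv.Perm (Fin n), h (decomposeFin.symm (q, e)) := by
  have key : ∀ e : Equiv.Perm (Fin n),
      decomposeFin.symm (q, (decomposeFin (swap p q * decomposeFin.symm (p, e))).2)
        = swap p q * decomposeFin.symm (p, e) := by
    intro e
    have h1 : (decomposeFin (swap p q * decomposeFin.symm (p, e))).1 = q := by
      rw [maurey_fst]
      simp [decomposeFin_symm_apply_zero]
    conv_rhs => rw [← decomposeFin.symm_apply_apply (swap p q * decomposeFin.symm (p, e))]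
    rw [show decomposeFin (swap p q * decomposeFin.symm (p, e))
        = ((decomposeFin (swap p q * decomposeFin.symm (p, e))).1,
           (decomposeFin (swap p q * decomposeFin.symm (p, e))).2) from rfl, h1]
  have hbij : Function.Bijective
      (fun e : Equiv.Perm (Fin n) => (decomposeFin (swap p q * decomposeFin.symm (p, e))).2) := by
    rw [Fintype.bijective_iff_injective_and_card]
    refine ⟨fun e e' hee => ?_, rfl⟩
    have := congrArg (fun z => decomposeFin.symm (q, z)) hee
    simp only at this
    rw [key e, key e'] at this
    have h2 := mul_left_cancel this
    have := decomposeFin.symm.injective (show decomposeFin.symm (p,e) = decomposeFin.symm (p,e') from h2)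
    exact (Prod.ext_iff.1 this).2
  calc ∑ e : Equiv.Perm (Fin n), h (swap p q * decomposeFin.symm (p, e))
      = ∑ e : Equiv.Perm (Fin n), h (decomposeFin.symm (q, (decomposeFin (swap p q * decomposeFin.symm (p, e))).2)) := by
        exact Finset.sum_congr rfl fun e _ => by rw [key e]
    _ = ∑ e : Equiv.Perm (Fin n), h (decomposeFin.symm (q, e)) :=
        Fintype.sum_bijective _ hbij _ _ (fun e => rfl)



lemma maurey_mgf : ∀ (n : ℕ) (c L : ℝ), 0 < c →
    ∀ f : Equiv.Perm (Fin n) → ℝ,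
    (∀ σ τ : Equiv.Perm (Fin n), |f σ - f τ| ≤ c * ((Finset.univ.filter fun i => σ i ≠ τ i).card : ℝ)) →
    ∑ σ : Equiv.Perm (Fin n), Real.exp (L * (f σ - (∑ τ : Equiv.Perm (Fin n), f τ) / (Fintype.card (Equiv.Perm (Fin n)) : ℝ)))
      ≤ (Fintype.card (Equiv.Perm (Fin n)) : ℝ) * Real.exp (2 * L ^ 2 * c ^ 2 * n) := by
  intro n
  induction n with
  | zero =>
    intro c L hc f hf
    haveI : Unique (Equiv.Perm (Fin 0)) := ⟨⟨1⟩, fun σ => Equiv.ext fun x => x.elim0⟩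
    rw [Fintype.sum_unique, Fintype.sum_unique]
    simp
  | succ n IH =>
    intro c L hc f hf
    set Nr : ℝ := (Fintype.card (Equiv.Perm (Fin n)) : ℝ) with hNr
    set N1 : ℝ := (Fintype.card (Equiv.Perm (Fin (n+1))) : ℝ) with hN1
    have hNrpos : 0 < Nr := by
      rw [hNr]; exact_mod_cast Fintype.card_pos
    have hN1pos : 0 < N1 := by
      rw [hN1]; exact_mod_cast Fintype.card_pos
    have hN1eq : N1 = (n + 1 : ℝ) * Nr := by
      rw [hNr, hN1]
      simp only [Fintype.card_perm, Fintype.card_fin, Nat.factorial_succ]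
      push_cast; ring
    set σp : Fin (n+1) → Equiv.Perm (Fin n) → Equiv.Perm (Fin (n+1)) :=
      fun p e => decomposeFin.symm (p, e) with hσp
    have sumdec : ∀ h : Equiv.Perm (Fin (n+1)) → ℝ,
        ∑ σ : Equiv.Perm (Fin (n+1)), h σ = ∑ p : Fin (n+1), ∑ e : Equiv.Perm (Fin n), h (σp p e) := by
      intro h
      rw [← Equiv.sum_comp decomposeFin.symm h, Fintype.sum_prod_type]
    set g : Fin (n+1) → ℝ := fun p => (∑ e : Equiv.Perm (Fin n), f (σp p e)) / Nr with hg
    set μ : ℝ := (∑ τ : Equiv.Perm (Fin (n+1)), f τ) / N1 with hμ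
    have F1 : ∑ p : Fin (n+1), g p = (n + 1 : ℝ) * μ := by
      rw [hg]
      simp only
      rw [← Finset.sum_div, ← sumdec f, hμ, hN1eq]
      field_simp
    -- Lipschitz bound for g
    have F4a : ∀ p q : Fin (n+1), |g p - g q| ≤ 2 * c := by
      intro p q
      have hq : g q = (∑ e : Equiv.Perm (Fin n), f (swap p q * σp p e)) / Nr := by
        rw [hg]; simp only
        rw [maurey_reindex p q f]
      have : g p - g q = (∑ e : Equiv.Perm (Fin n), (f (σp p e) - f (swap p q * σp p e))) / Nr := by
        rw [hq, hg]
        simp only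
        rw [Finset.sum_sub_distrib, sub_div]
      rw [this, abs_div, abs_of_pos hNrpos, div_le_iff₀ hNrpos]
      calc |∑ e : Equiv.Perm (Fin n), (f (σp p e) - f (swap p q * σp p e))|
          ≤ ∑ e : Equiv.Perm (Fin n), |f (σp p e) - f (swap p q * σp p e)| := Finset.abs_sum_le_sum_abs _ _
        _ ≤ ∑ _e : Equiv.Perm (Fin n), 2 * c := by
            apply Finset.sum_le_sum
            intro e _
            calc |f (σp p e) - f (swap p q * σp p e)|
                ≤ c * ((Finset.univ.filter fun i => σp p e i ≠ (swap p q * σp p e) i).card : ℝ) := hf _ _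
              _ ≤ c * 2 := mul_le_mul_of_nonneg_left (maurey_swap_card p q (σp p e)) hc.le
              _ = 2 * c := by ring
        _ = 2 * c * Nr := by
            rw [Finset.sum_const, Finset.card_univ, nsmul_eq_mul, hNr]; ring
    have F4 : ∀ p : Fin (n+1), |g p - μ| ≤ 2 * c := by
      intro p
      have : g p - μ = (∑ q : Fin (n+1), (g p - g q)) / (n + 1 : ℝ) := by
        rw [Finset.sum_sub_distrib, Finset.sum_const, Finset.card_univ, Fintype.card_fin,
          nsmul_eq_mul, F1]
        push_cast
        field_simp
      rw [this, abs_div, abs_of_pos (by positivity : (0:ℝ) < (n+1:ℝ)), div_le_iff₀ (by positivity : (0:ℝ) < (n+1:ℝ))]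
      calc |∑ q : Fin (n+1), (g p - g q)| ≤ ∑ q : Fin (n+1), |g p - g q| := Finset.abs_sum_le_sum_abs _ _
        _ ≤ ∑ _q : Fin (n+1), 2 * c := Finset.sum_le_sum fun q _ => F4a p q
        _ = 2 * c * (n + 1 : ℝ) := by
            rw [Finset.sum_const, Finset.card_univ, Fintype.card_fin, nsmul_eq_mul]
            push_cast; ring
    -- inner bound via IH
    have Finner : ∀ p : Fin (n+1),
        ∑ e : Equiv.Perm (Fin n), Real.exp (L * (f (σp p e) - g p))
          ≤ Nr * Real.exp (2 * L ^ 2 * c ^ 2 * n) := by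
      intro p
      have hlip : ∀ e e' : Equiv.Perm (Fin n),
          |f (σp p e) - f (σp p e')| ≤ c * ((Finset.univ.filter fun j => e j ≠ e' j).card : ℝ) := by
        intro e e'
        have := hf (σp p e) (σp p e')
        rwa [hσp, maurey_coset_card p e e'] at this
      have := IH c L hc (fun e => f (σp p e)) hlip
      simpa [hg, hNr] using this
    -- outer bound via Hoeffding lemma
    have Fouter : ∑ p : Fin (n+1), Real.exp (L * (g p - μ))
        ≤ (n + 1 : ℝ) * Real.exp (L ^ 2 * (2 * c) ^ 2 / 2) := by
      have hsum0 : ∑ p : Fin (n+1), (g p - μ) = 0 := by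
        rw [Finset.sum_sub_distrib, Finset.sum_const, Finset.card_univ, Fintype.card_fin,
          nsmul_eq_mul, F1]
        push_cast; ring
      have := maurey_hoeffding (fun p : Fin (n+1) => g p - μ) (2 * c) L (by positivity) hsum0 F4
      simpa using this
    -- assemble
    calc ∑ σ : Equiv.Perm (Fin (n+1)), Real.exp (L * (f σ - μ))
        = ∑ p : Fin (n+1), ∑ e : Equiv.Perm (Fin n), Real.exp (L * (f (σp p e) - μ)) :=
          sumdec _
      _ = ∑ p : Fin (n+1), Real.exp (L * (g p - μ)) * ∑ e : Equiv.Perm (Fin n), Real.exp (L * (f (σp p e) - g p)) := by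
          apply Finset.sum_congr rfl
          intro p _
          rw [Finset.mul_sum]
          apply Finset.sum_congr rfl
          intro e _
          rw [← Real.exp_add]
          ring_nf
      _ ≤ ∑ p : Fin (n+1), Real.exp (L * (g p - μ)) * (Nr * Real.exp (2 * L ^ 2 * c ^ 2 * n)) := by
          apply Finset.sum_le_sum
          intro p _
          exact mul_le_mul_of_nonneg_left (Finner p) (Real.exp_nonneg _)
      _ = (Nr * Real.exp (2 * L ^ 2 * c ^ 2 * n)) * ∑ p : Fin (n+1), Real.exp (L * (g p - μ)) := by
          rw [← Finset.sum_mul]; ring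
      _ ≤ (Nr * Real.exp (2 * L ^ 2 * c ^ 2 * n)) * ((n + 1 : ℝ) * Real.exp (L ^ 2 * (2 * c) ^ 2 / 2)) := by
          apply mul_le_mul_of_nonneg_left Fouter (by positivity)
      _ = N1 * Real.exp (2 * L ^ 2 * c ^ 2 * (n + 1 : ℕ)) := by
          have hexp : Real.exp (2 * L ^ 2 * c ^ 2 * ((n:ℝ) + 1))
              = Real.exp (2 * L ^ 2 * c ^ 2 * (n:ℝ)) * Real.exp (L ^ 2 * (2 * c) ^ 2 / 2) := by
            rw [← Real.exp_add]; ring_nf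
          rw [hN1eq]
          push_cast
          rw [hexp]
          ring



lemma maurey_tail_one (r : ℕ) (hr : 1 ≤ r) (M : ℝ) (hM : 0 < M)
    (f : Equiv.Perm (Fin r) → ℝ)
    (hf : ∀ π τ : Equiv.Perm (Fin r),
      |f π - f τ| ≤ M * (((Finset.univ.filter fun i : Fin r => π i ≠ τ i).card : ℝ) / r))
    (ε : ℝ) (hε : 0 ≤ ε) :
    ((Finset.univ.filter fun π : Equiv.Perm (Fin r) =>
        ε < f π - (∑ τ : Equiv.Perm (Fin r), f τ) / (Fintype.card (Equiv.Perm (Fin r)) : ℝ)).card : ℝ)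
      ≤ (Fintype.card (Equiv.Perm (Fin r)) : ℝ) * Real.exp (-((r : ℝ) * ε ^ 2) / (16 * M ^ 2)) := by
  have hrpos : (0:ℝ) < r := by exact_mod_cast hr
  set N : ℝ := (Fintype.card (Equiv.Perm (Fin r)) : ℝ) with hN
  have hNpos : 0 < N := by rw [hN]; exact_mod_cast Fintype.card_pos
  set μ : ℝ := (∑ τ : Equiv.Perm (Fin r), f τ) / N with hμ
  set c : ℝ := M / r with hc
  have hcpos : 0 < c := by positivity
  set L : ℝ := r * ε / (4 * M ^ 2) with hL
  have hLnn : 0 ≤ L := by positivity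
  have hf' : ∀ σ τ : Equiv.Perm (Fin r),
      |f σ - f τ| ≤ c * ((Finset.univ.filter fun i => σ i ≠ τ i).card : ℝ) := by
    intro σ τ
    calc |f σ - f τ| ≤ M * (((Finset.univ.filter fun i : Fin r => σ i ≠ τ i).card : ℝ) / r) := hf σ τ
      _ = c * ((Finset.univ.filter fun i => σ i ≠ τ i).card : ℝ) := by rw [hc]; ring
  have hmgf := maurey_mgf r c L hcpos f hf'
  have hmarkov : ((Finset.univ.filter fun π : Equiv.Perm (Fin r) => ε < f π - μ).card : ℝ) * Real.exp (L * ε)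
      ≤ ∑ σ : Equiv.Perm (Fin r), Real.exp (L * (f σ - μ)) := by
    calc ((Finset.univ.filter fun π : Equiv.Perm (Fin r) => ε < f π - μ).card : ℝ) * Real.exp (L * ε)
        = ∑ _σ ∈ Finset.univ.filter fun π : Equiv.Perm (Fin r) => ε < f π - μ, Real.exp (L * ε) := by
          rw [Finset.sum_const, nsmul_eq_mul]
      _ ≤ ∑ σ ∈ Finset.univ.filter fun π : Equiv.Perm (Fin r) => ε < f π - μ, Real.exp (L * (f σ - μ)) := by
          apply Finset.sum_le_sum
          intro σ hσ
          have := (Finset.mem_filter.1 hσ).2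
          exact Real.exp_le_exp.2 (mul_le_mul_of_nonneg_left this.le hLnn)
      _ ≤ ∑ σ : Equiv.Perm (Fin r), Real.exp (L * (f σ - μ)) := by
          apply Finset.sum_le_sum_of_subset_of_nonneg (Finset.filter_subset _ _)
          intro σ _ _
          exact Real.exp_nonneg _
  have hstep : ((Finset.univ.filter fun π : Equiv.Perm (Fin r) => ε < f π - μ).card : ℝ)
      ≤ N * Real.exp (2 * L ^ 2 * c ^ 2 * r - L * ε) := by
    have h1 : ((Finset.univ.filter fun π : Equiv.Perm (Fin r) => ε < f π - μ).card : ℝ) * Real.exp (L * ε)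
        ≤ N * Real.exp (2 * L ^ 2 * c ^ 2 * r) := le_trans hmarkov hmgf
    have h2 : (0:ℝ) < Real.exp (L * ε) := Real.exp_pos _
    rw [Real.exp_sub, ← mul_div_assoc, le_div_iff₀ h2]
    exact h1
  have hexp : 2 * L ^ 2 * c ^ 2 * r - L * ε ≤ -((r : ℝ) * ε ^ 2) / (16 * M ^ 2) := by
    have heq : 2 * L ^ 2 * c ^ 2 * (r:ℝ) - L * ε = -((r : ℝ) * ε ^ 2) / (8 * M ^ 2) := by
      rw [hL, hc]
      field_simp
      ring
    rw [heq]
    rw [div_le_div_iff₀ (by positivity) (by positivity)]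
    nlinarith [mul_nonneg hrpos.le (sq_nonneg ε), sq_nonneg M]
  calc ((Finset.univ.filter fun π : Equiv.Perm (Fin r) => ε < f π - μ).card : ℝ)
      ≤ N * Real.exp (2 * L ^ 2 * c ^ 2 * r - L * ε) := hstep
    _ ≤ N * Real.exp (-((r : ℝ) * ε ^ 2) / (16 * M ^ 2)) :=
        mul_le_mul_of_nonneg_left (Real.exp_le_exp.2 hexp) hNpos.le

end MaureyAux

open scoped Classical in
/-- Maurey's concentration inequality on the permutation group.
Let `S_r` be the symmetric group on `{1,…,r}` with the normalized Hamming distance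
`d_H(π,τ) = (1/r) #{i : π i ≠ τ i}` and `ℚ_r` the uniform measure (expressed here as
counting fractions).  If `f : S_r → ℝ` is `M`-Lipschitz for `d_H`, then for every `ε ≥ 0`,
`ℚ_r(|f − E f| > ε) ≤ 2 exp(−r ε² / (16 M²))`. -/
theorem maurey_concentration
    (r : ℕ) (hr : 1 ≤ r) (M : ℝ) (hM : 0 < M)
    (f : Equiv.Perm (Fin r) → ℝ)
    (hf : ∀ π τ : Equiv.Perm (Fin r),
      |f π - f τ| ≤ M * (((Finset.univ.filter fun i : Fin r => π i ≠ τ i).card : ℝ) / r))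
    (ε : ℝ) (hε : 0 ≤ ε) :
    (((Finset.univ.filter fun π : Equiv.Perm (Fin r) =>
        ε < |f π - (∑ τ : Equiv.Perm (Fin r), f τ) / (Fintype.card (Equiv.Perm (Fin r)) : ℝ)|).card : ℝ)
      / (Fintype.card (Equiv.Perm (Fin r)) : ℝ))
      ≤ 2 * Real.exp (-((r : ℝ) * ε ^ 2) / (16 * M ^ 2)) := by
  have hNpos : (0:ℝ) < (Fintype.card (Equiv.Perm (Fin r)) : ℝ) := by exact_mod_cast Fintype.card_pos
  set N : ℝ := (Fintype.card (Equiv.Perm (Fin r)) : ℝ) with hN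
  set μ : ℝ := (∑ τ : Equiv.Perm (Fin r), f τ) / N with hμ
  have h1 := maurey_tail_one r hr M hM f hf ε hε
  have hf2 : ∀ π τ : Equiv.Perm (Fin r),
      |(fun π => -f π) π - (fun π => -f π) τ|
        ≤ M * (((Finset.univ.filter fun i : Fin r => π i ≠ τ i).card : ℝ) / r) := by
    intro π τ
    simp only [neg_sub_neg]
    rw [abs_sub_comm]
    exact hf π τ
  have h2 := maurey_tail_one r hr M hM (fun π => -f π) hf2 ε hε
  have hμ2 : (∑ τ : Equiv.Perm (Fin r), -f τ) / N = -μ := by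
    rw [Finset.sum_neg_distrib, neg_div, hμ]
  have h2' : ((Finset.univ.filter fun π : Equiv.Perm (Fin r) => ε < μ - f π).card : ℝ)
      ≤ N * Real.exp (-((r : ℝ) * ε ^ 2) / (16 * M ^ 2)) := by
    have hpred : ∀ π : Equiv.Perm (Fin r),
        (ε < -f π - (∑ τ : Equiv.Perm (Fin r), -f τ) / N) ↔ (ε < μ - f π) := by
      intro π
      rw [hμ2]
      constructor <;> intro h <;> linarith
    calc ((Finset.univ.filter fun π : Equiv.Perm (Fin r) => ε < μ - f π).card : ℝ)
        = ((Finset.univ.filter fun π : Equiv.Perm (Fin r) =>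
            ε < -f π - (∑ τ : Equiv.Perm (Fin r), -f τ) / N).card : ℝ) := by
          have heq : (Finset.univ.filter fun π : Equiv.Perm (Fin r) => ε < μ - f π)
              = (Finset.univ.filter fun π : Equiv.Perm (Fin r) =>
                  ε < -f π - (∑ τ : Equiv.Perm (Fin r), -f τ) / N) :=
            Finset.filter_congr fun π _ => by rw [← hpred π, Finset.sum_neg_distrib]
          rw [heq]
      _ ≤ N * Real.exp (-((r : ℝ) * ε ^ 2) / (16 * M ^ 2)) := h2
  have hsub : (Finset.univ.filter fun π : Equiv.Perm (Fin r) => ε < |f π - μ|)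
      ⊆ (Finset.univ.filter fun π : Equiv.Perm (Fin r) => ε < f π - μ)
        ∪ (Finset.univ.filter fun π : Equiv.Perm (Fin r) => ε < μ - f π) := by
    intro π hπ
    simp only [Finset.mem_filter, Finset.mem_union, Finset.mem_univ, true_and] at *
    rcases lt_abs.1 hπ with h | h
    · exact Or.inl h
    · right; linarith [neg_sub (f π) μ ▸ h]
  have hcard : ((Finset.univ.filter fun π : Equiv.Perm (Fin r) => ε < |f π - μ|).card : ℝ)
      ≤ 2 * Real.exp (-((r : ℝ) * ε ^ 2) / (16 * M ^ 2)) * N := by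
    calc ((Finset.univ.filter fun π : Equiv.Perm (Fin r) => ε < |f π - μ|).card : ℝ)
        ≤ (((Finset.univ.filter fun π : Equiv.Perm (Fin r) => ε < f π - μ)
            ∪ (Finset.univ.filter fun π : Equiv.Perm (Fin r) => ε < μ - f π)).card : ℝ) := by
          exact_mod_cast Finset.card_le_card hsub
      _ ≤ ((Finset.univ.filter fun π : Equiv.Perm (Fin r) => ε < f π - μ).card : ℝ)
          + ((Finset.univ.filter fun π : Equiv.Perm (Fin r) => ε < μ - f π).card : ℝ) := by
          exact_mod_cast Finset.card_union_le _ _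
      _ ≤ N * Real.exp (-((r : ℝ) * ε ^ 2) / (16 * M ^ 2))
          + N * Real.exp (-((r : ℝ) * ε ^ 2) / (16 * M ^ 2)) := add_le_add h1 h2'
      _ = 2 * Real.exp (-((r : ℝ) * ε ^ 2) / (16 * M ^ 2)) * N := by ring
  rw [div_le_iff₀ hNpos]
  exact hcard
end

section
/- Let μ be a finite Borel measure on [0,∞) and let h > 0. Then d_BL(μ, S*_h μ) ≤ ω(h; μ) + μ([0,∞)) · h. -/
/-!
Split `∫ φ dμ - ∫ φ d(S*_h μ)` as `∫_{[0,h)} φ dμ + ∫_{[h,∞)} (φ x - φ (x - h)) dμ`.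
The first term is at most `sup |φ| · μ([0,h)) ≤ sup |φ| · ω(h; μ)`, the second at most
`Lip(φ) · h · μ([h,∞))`, and `sup |φ| + Lip(φ) ≤ 1`.
-/

open MeasureTheory Set
open scoped NNReal

/-- `‖φ‖_BL ≤ 1`: the function `φ` is bounded by `a` and Lipschitz with constant `b`
for some `a + b ≤ 1` (bounded-Lipschitz norm `sup |φ| + Lip(φ)` at most one). -/
def BLnormLEone (φ : ℝ → ℝ) : Prop :=
  ∃ a b : NNReal, (a : ℝ) + (b : ℝ) ≤ 1 ∧ (∀ x, |φ x| ≤ a) ∧ LipschitzWith b φ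

/-- The bounded-Lipschitz distance between two finite Borel measures:
`d_BL(μ,ν) = sup { ∫ φ dμ − ∫ φ dν : ‖φ‖_BL ≤ 1 }`. -/
noncomputable def dBL (μ ν : Measure ℝ) : ℝ :=
  sSup {d : ℝ | ∃ φ : ℝ → ℝ, BLnormLEone φ ∧ d = (∫ x, φ x ∂μ) - ∫ x, φ x ∂ν}

/-- The shifted measure `S*_h μ`: the pushforward under `x ↦ x − h` of the restriction of
`μ` to `[h,∞)`. -/
noncomputable def Sstar (h : ℝ) (μ : Measure ℝ) : Measure ℝ :=
  (μ.restrict (Ici h)).map (fun x => x - h)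

/-- The modulus `ω(h; μ) = sup_{x ≥ 0} μ([x, x+h))`. -/
noncomputable def omegaMeas (h : ℝ) (μ : Measure ℝ) : ℝ :=
  ⨆ x : Ici (0:ℝ), (μ (Ico (x : ℝ) ((x : ℝ) + h))).toReal

theorem integral_Sstar (h : ℝ) (μ : Measure ℝ) (φ : ℝ → ℝ) :
    ∫ x, φ x ∂Sstar h μ = ∫ x in Ici h, φ (x - h) ∂μ :=
  (Homeomorph.subRight h).measurableEmbedding.integral_map φ

theorem integral_sub_integral_Sstar_le {μ : Measure ℝ} [IsFiniteMeasure μ] {φ : ℝ → ℝ}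
    {a b : ℝ≥0} (hbound : ∀ x, |φ x| ≤ a) (hlip : LipschitzWith b φ) (h : ℝ) :
    (∫ x, φ x ∂μ) - ∫ x, φ x ∂Sstar h μ ≤ a * μ.real (Iio h) + b * |h| * μ.real (Ici h) := by
  have hint : Integrable φ μ :=
    .of_bound hlip.continuous.aestronglyMeasurable a (.of_forall hbound)
  have hint_shift : Integrable (fun x => φ (x - h)) (μ.restrict (Ici h)) :=
    .of_bound (hlip.continuous.comp (continuous_sub_right h)).aestronglyMeasurable a
      (.of_forall fun x => hbound (x - h))
  have hshift : ∀ x, ‖φ x - φ (x - h)‖ ≤ b * |h| := fun x => by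
    simpa [Real.dist_eq] using hlip.dist_le_mul x (x - h)
  calc (∫ x, φ x ∂μ) - ∫ x, φ x ∂Sstar h μ
      = (∫ x in Iio h, φ x ∂μ) + ∫ x in Ici h, (φ x - φ (x - h)) ∂μ := by
        rw [integral_Sstar, ← integral_add_compl measurableSet_Iio hint, compl_Iio,
          integral_sub hint.integrableOn hint_shift]
        ring
    _ ≤ ‖∫ x in Iio h, φ x ∂μ‖ + ‖∫ x in Ici h, (φ x - φ (x - h)) ∂μ‖ :=
        add_le_add (Real.le_norm_self _) (Real.le_norm_self _)
    _ ≤ a * μ.real (Iio h) + b * |h| * μ.real (Ici h) :=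
        add_le_add
          (norm_setIntegral_le_of_norm_le_const (measure_lt_top _ _) fun x _ => hbound x)
          (norm_setIntegral_le_of_norm_le_const (measure_lt_top _ _) fun x _ => hshift x)

theorem measureReal_Ico_le_omegaMeas {μ : Measure ℝ} [IsFiniteMeasure μ] {x : ℝ} (hx : 0 ≤ x)
    (h : ℝ) : μ.real (Ico x (x + h)) ≤ omegaMeas h μ := by
  refine le_ciSup (f := fun y : Ici (0 : ℝ) => μ.real (Ico (y : ℝ) (y + h))) ?_ ⟨x, hx⟩
  exact ⟨μ.real univ, by rintro _ ⟨y, rfl⟩; exact measureReal_mono (subset_univ _)⟩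

theorem measureReal_Iio_le_omegaMeas {μ : Measure ℝ} [IsFiniteMeasure μ] (hsupp : μ (Iio 0) = 0)
    (h : ℝ) : μ.real (Iio h) ≤ omegaMeas h μ :=
  calc μ.real (Iio h) ≤ μ.real (Iio 0 ∪ Ico 0 (0 + h)) :=
        measureReal_mono fun x hx => by
          rcases lt_or_ge x 0 with hx0 | hx0
          · exact .inl hx0
          · exact .inr ⟨hx0, by simpa using hx⟩
    _ ≤ μ.real (Iio 0) + μ.real (Ico 0 (0 + h)) := measureReal_union_le _ _
    _ ≤ omegaMeas h μ := by
        simpa [measureReal_def, hsupp] using measureReal_Ico_le_omegaMeas le_rfl h (μ := μ)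

/-- continuity of the shift in the BL metric.
For a finite Borel measure `μ` on `[0,∞)` and `h > 0`,
`d_BL(μ, S*_h μ) ≤ ω(h; μ) + μ([0,∞)) h`. -/
theorem shift_BL_estimate
    (μ : Measure ℝ) [IsFiniteMeasure μ] (hsupp : μ (Iio 0) = 0)
    (h : ℝ) (hh : 0 < h) :
    dBL μ (Sstar h μ) ≤ omegaMeas h μ + (μ univ).toReal * h := by
  refine csSup_le ⟨0, 0, ⟨0, 0, by simp, by simp, LipschitzWith.const 0⟩, by simp⟩ ?_
  rintro _ ⟨φ, ⟨a, b, hab, hbound, hlip⟩, rfl⟩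
  have ha : (a : ℝ) ≤ 1 := by linarith [b.2]
  have hb : (b : ℝ) ≤ 1 := by linarith [a.2]
  have hIio := measureReal_Iio_le_omegaMeas hsupp h
  have hIci : μ.real (Ici h) ≤ μ.real univ := measureReal_mono (subset_univ _)
  calc _ ≤ a * μ.real (Iio h) + b * |h| * μ.real (Ici h) :=
        integral_sub_integral_Sstar_le hbound hlip h
    _ ≤ 1 * omegaMeas h μ + 1 * h * μ.real univ := by
        rw [abs_of_pos hh]
        gcongr
    _ = omegaMeas h μ + (μ univ).toReal * h := by rw [measureReal_def]; ring
end

section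
/- Let f0 : (0,∞) → [0,∞) be an integrable function with ∫₀^∞ f0 = 1 and let F0(x) = ∫₀^x f0(y) dy be its (continuous) distribution function. Let n ≥ 1 be an integer and let a₁ ≤ a₂ ≤ … ≤ a_n be points of (0,∞) with F0(a_k) = (2k−1)/(2n) for 1 ≤ k ≤ n, and set empN₀ = (1/n) Σ_{k=1}^n δ_{a_k}. Then for every h > 0, ω(h; empN₀) ≤ ω(h; F0) + 1/n, where ω(h; F0) = sup_{x ≥ 0} (F0(x+h) − F0(x)). -/
open MeasureTheory Set

/-!
The distribution function `F0` is monotone, so every atom `a k` in a window `[x, x + h)` has its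
level `F0 (a k) = (2k+1)/(2n)` in `[F0 x, F0 (x + h)]`. Consecutive levels are `1/n` apart, hence
the window holds at most `n (F0 (x + h) - F0 x) + 1` atoms, i.e. empirical mass at most
`F0 (x + h) - F0 x + 1/n`.
-/

open Finset in
lemma smul_sum_dirac_apply {α ι : Type*} [MeasurableSpace α] [Fintype ι] (c : ENNReal)
    (a : ι → α) {s : Set α} (hs : MeasurableSet s) [DecidablePred (a · ∈ s)] :
    (c • ∑ k, Measure.dirac (a k)) s = c * #{k | a k ∈ s} := by
  rw [Measure.smul_apply, Measure.finsetSum_apply, smul_eq_mul, ← sum_boole]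
  congr 1
  refine sum_congr rfl fun k _ => ?_
  rw [Measure.dirac_apply' _ hs]
  simp [indicator_apply]

lemma monotone_setIntegral_Ioc {f : ℝ → ℝ} {c : ℝ} (hf : ∀ x ∈ Ioi c, 0 ≤ f x)
    (hint : IntegrableOn f (Ioi c)) : Monotone fun x => ∫ y in Ioc c x, f y := fun _ _ huv =>
  setIntegral_mono_set (hint.mono_set Ioc_subset_Ioi_self)
    (ae_restrict_of_forall_mem measurableSet_Ioc fun z hz => hf z hz.1)
    (Ioc_subset_Ioc_right huv).eventuallyLE

lemma setIntegral_Ioc_mem_Icc {f : ℝ → ℝ} {c : ℝ} (hf : ∀ x ∈ Ioi c, 0 ≤ f x)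
    (hint : IntegrableOn f (Ioi c)) (x : ℝ) :
    ∫ y in Ioc c x, f y ∈ Icc 0 (∫ y in Ioi c, f y) :=
  ⟨setIntegral_nonneg measurableSet_Ioc fun z hz => hf z hz.1,
    setIntegral_mono_set hint (ae_restrict_of_forall_mem measurableSet_Ioi hf)
      Ioc_subset_Ioi_self.eventuallyLE⟩

lemma bddAbove_range_increment {F : ℝ → ℝ} {m M : ℝ} (hF : ∀ x, F x ∈ Icc m M) (h : ℝ)
    (s : Set ℝ) : BddAbove (range fun x : s => F (x + h) - F x) :=
  ⟨M - m, by rintro _ ⟨x, rfl⟩; linarith [(hF (x + h)).2, (hF x).1]⟩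

open Finset in
lemma card_quantile_mem_Ico_le {F : ℝ → ℝ} (hF : Monotone F) {n : ℕ} {a : Fin n → ℝ}
    (hquant : ∀ k : Fin n, F (a k) = (2 * (k : ℝ) + 1) / (2 * n)) {x y : ℝ} (hxy : x ≤ y) :
    (#{k | a k ∈ Ico x y} : ℝ) ≤ n * (F y - F x) + 1 := by
  set S : Finset (Fin n) := {k | a k ∈ Ico x y}
  rcases S.eq_empty_or_nonempty with hS | hS
  · rw [hS, Finset.card_empty, Nat.cast_zero]
    have : 0 ≤ F y - F x := sub_nonneg.mpr (hF hxy)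
    positivity
  have hi := mem_filter.mp (S.min'_mem hS)
  have hj := mem_filter.mp (S.max'_mem hS)
  set i := S.min' hS
  set j := S.max' hS
  have hn : (0:ℝ) < n := by exact_mod_cast i.pos
  have hcard : #S ≤ (j : ℕ) + 1 - i := by
    rw [← Fin.card_Icc]
    exact card_le_card fun k hk => mem_Icc.mpr ⟨S.min'_le k hk, S.le_max' k hk⟩
  have hlevels : (j : ℝ) - i = n * (F (a j) - F (a i)) := by
    rw [hquant, hquant]
    field_simp
    ring
  have hcardR : (#S : ℝ) ≤ (j : ℝ) + 1 - i := by
    have hij : i ≤ j := S.min'_le j (S.max'_mem hS)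
    rw [← Nat.cast_add_one, ← Nat.cast_sub (by omega)]
    exact_mod_cast hcard
  have hFij : F (a j) - F (a i) ≤ F y - F x := by linarith [hF hi.2.1, hF hj.2.2.le]
  linarith [mul_le_mul_of_nonneg_left hFij hn.le]

theorem empirical_modulus_estimate_general
    (f0 : ℝ → ℝ)
    (hf0nonneg : ∀ x ∈ Ioi (0:ℝ), 0 ≤ f0 x)
    (hf0int : IntegrableOn f0 (Ioi 0))
    (F0 : ℝ → ℝ) (hF0 : ∀ x, F0 x = ∫ y in Ioc (0:ℝ) x, f0 y)
    (n : ℕ)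
    (a : Fin n → ℝ)
    (hquant : ∀ k : Fin n, F0 (a k) = (2 * (k : ℝ) + 1) / (2 * n)) :
    ∀ h : ℝ, 0 < h →
      omegaMeas h ((n : ENNReal)⁻¹ • ∑ k : Fin n, Measure.dirac (a k))
        ≤ (⨆ x : Ici (0:ℝ), (F0 ((x : ℝ) + h) - F0 (x : ℝ))) + 1 / n := by
  intro h hpos
  have hmono : Monotone F0 := funext hF0 ▸ monotone_setIntegral_Ioc hf0nonneg hf0int
  have hbdd := bddAbove_range_increment
    (fun x => (hF0 x).symm ▸ setIntegral_Ioc_mem_Icc hf0nonneg hf0int x) h (Ici 0)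
  refine ciSup_le fun x => ?_
  classical
  have hxh : (x : ℝ) ≤ x + h := le_add_of_nonneg_right hpos.le
  rw [smul_sum_dirac_apply _ _ measurableSet_Ico, ENNReal.toReal_mul, ENNReal.toReal_inv,
    ENNReal.toReal_natCast, ENNReal.toReal_natCast]
  calc (n : ℝ)⁻¹ * (Finset.univ.filter fun k => a k ∈ Ico (x : ℝ) (x + h)).card
      ≤ (n : ℝ)⁻¹ * (n * (F0 (x + h) - F0 x) + 1) :=
        mul_le_mul_of_nonneg_left (card_quantile_mem_Ico_le hmono hquant hxh) (by positivity)
    _ = ((n : ℝ)⁻¹ * n) * (F0 (x + h) - F0 x) + 1 / n := by ring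
    _ ≤ F0 (x + h) - F0 x + 1 / n := by
        gcongr
        exact mul_le_of_le_one_left (sub_nonneg.mpr (hmono hxh)) inv_mul_le_one
    _ ≤ _ := by gcongr; exact le_ciSup hbdd x

/-- modulus of continuity of the quantile empirical measure.
Let `f0 ≥ 0` be integrable on `(0,∞)` with total mass `1` and distribution function `F0`.
If `a₁ ≤ … ≤ a_n` are points of `(0,∞)` with `F0(a_k) = (2k−1)/(2n)` and
`empN₀ = (1/n) Σ δ_{a_k}`, then for every `h > 0`,
`ω(h; empN₀) ≤ ω(h; F0) + 1/n`, where `ω(h; F0) = sup_{x ≥ 0} (F0(x+h) − F0(x))`. -/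
theorem empirical_modulus_estimate
    (f0 : ℝ → ℝ)
    (hf0nonneg : ∀ x ∈ Ioi (0:ℝ), 0 ≤ f0 x)
    (hf0int : IntegrableOn f0 (Ioi 0))
    (hf0norm : ∫ y in Ioi (0:ℝ), f0 y = 1)
    (F0 : ℝ → ℝ) (hF0 : ∀ x, F0 x = ∫ y in Ioc (0:ℝ) x, f0 y)
    (n : ℕ) (hn : 1 ≤ n)
    (a : Fin n → ℝ) (hamono : Monotone a) (hapos : ∀ k, 0 < a k)
    (hquant : ∀ k : Fin n, F0 (a k) = (2 * (k : ℝ) + 1) / (2 * n)) :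
    ∀ h : ℝ, 0 < h →
      omegaMeas h ((n : ENNReal)⁻¹ • ∑ k : Fin n, Measure.dirac (a k))
        ≤ (⨆ x : Ici (0:ℝ), (F0 ((x : ℝ) + h) - F0 (x : ℝ))) + 1 / n :=
  empirical_modulus_estimate_general f0 hf0nonneg hf0int F0 hF0 n a hquant
end
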